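/- arXiv:1210.4745 — 6 statements merged into one kernel-verified Lean document; each statement's English description precedes it below -/
import Mathlib

section
/- Let δ : 𝒮_K → V_K be defined by δ(z) = (z^{(2)} − z^{(1)}, …, z^{(K+1)} − z^{(K)}). Let z₁, z₂ ∈ 𝒮_K and ε ∈ {−1, 1} be such that z₂^{(1)} = z₁^{(1)} + ε. Then |z₂^{(i)} − z₁^{(i)}| = 1 for all 1 ≤ i ≤ K+1 if and only if the pair (δ(z₁), δ(z₂)) is an edge of E_K^{ε} (where, in the case δ(z₁) = δ(z₂), membership in E_K^{ε} means the loop (δ(z₁), δ(z₁))^{ε}). In particular, for adjacent configurations the value of the vector field A on the edge (δ(z₁), δ(z₂)) equals the height increment z₂^{(1)} − z₁^{(1)}. -/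
open Finset MeasureTheory Filter

namespace CRW

/-- The vertex set `V_K = {-1,1}^K ⊆ ℤ^K`. -/
def V (K : ℕ) : Finset (Fin K → ℤ) :=
  Fintype.piFinset fun _ => ({-1, 1} : Finset ℤ)

/-- The nonzero entries of `b - a`, read in order of increasing index, alternate in sign,
the first nonzero entry being negative (the `c`-th nonzero entry, `0`-indexed, equals
`2 * (-1)^(c+1)`; in particular all entries lie in `{-2,0,2}`). -/
def AltNeg (K : ℕ) (a b : Fin K → ℤ) : Prop :=
  ∀ i : Fin K, b i - a i ≠ 0 →
    b i - a i =
      2 * (-1 : ℤ) ^ (((Finset.univ.filter fun j : Fin K => j < i ∧ b j - a j ≠ 0)).card + 1)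

/-- Same with the first nonzero entry positive. -/
def AltPos (K : ℕ) (a b : Fin K → ℤ) : Prop :=
  ∀ i : Fin K, b i - a i ≠ 0 →
    b i - a i =
      2 * (-1 : ℤ) ^ ((Finset.univ.filter fun j : Fin K => j < i ∧ b j - a j ≠ 0)).card

instance (K : ℕ) (a b : Fin K → ℤ) : Decidable (AltNeg K a b) := by
  unfold AltNeg; infer_instance

instance (K : ℕ) (a b : Fin K → ℤ) : Decidable (AltPos K a b) := by
  unfold AltPos; infer_instance

/-- The set `E_K^+` of positive edges: couples `(a,b)` of vertices with `a ≠ b` whose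
difference has nonzero entries of alternating signs, the first one negative; together
with one (positive) loop `(a,a)` at every vertex. -/
def Eplus (K : ℕ) : Finset ((Fin K → ℤ) × (Fin K → ℤ)) :=
  ((V K) ×ˢ (V K)).filter fun p => p.1 = p.2 ∨ AltNeg K p.1 p.2

/-- The set `E_K^-` of negative edges, with one (negative) loop at every vertex. -/
def Eminus (K : ℕ) : Finset ((Fin K → ℤ) × (Fin K → ℤ)) :=
  ((V K) ×ˢ (V K)).filter fun p => p.1 = p.2 ∨ AltPos K p.1 p.2

/-- Type of signed edges: the Boolean records whether the edge is positive. -/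
abbrev Edge (K : ℕ) := Bool × ((Fin K → ℤ) × (Fin K → ℤ))

/-- `E_K = E_K^+ ⊔ E_K^-` as a disjoint union (positive edges tagged `true`). -/
def EK (K : ℕ) : Finset (Edge K) :=
  (Eplus K).image (fun p => (true, p)) ∪ (Eminus K).image (fun p => (false, p))

/-- The vector field `A`, equal to `+1` on `E_K^+` and `-1` on `E_K^-`. -/
noncomputable def A (K : ℕ) : Edge K → ℝ := fun e => if e.1 then 1 else -1

/-- `α_k(a)`: the number of `b` with `(a,b) ∈ E_K^+` differing from `a` in exactly `k`
coordinates. -/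
def alphaK (K k : ℕ) (a : Fin K → ℤ) : ℕ :=
  ((V K).filter fun b =>
    (a, b) ∈ Eplus K ∧ (Finset.univ.filter fun i : Fin K => b i ≠ a i).card = k).card

/-- `ᾱ_k(a)`: the number of `b` with `(a,b) ∈ E_K^-` differing from `a` in exactly `k`
coordinates. -/
def abarK (K k : ℕ) (a : Fin K → ℤ) : ℕ :=
  ((V K).filter fun b =>
    (a, b) ∈ Eminus K ∧ (Finset.univ.filter fun i : Fin K => b i ≠ a i).card = k).card

/-- `α_ev(a) = Σ_{k even} α_k(a)`. -/
def alphaEv (K : ℕ) (a : Fin K → ℤ) : ℕ :=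
  ∑ k ∈ (Finset.range (K + 1)).filter (fun k => Even k), alphaK K k a

/-- `α_od(a) = Σ_{k odd} α_k(a)`. -/
def alphaOd (K : ℕ) (a : Fin K → ℤ) : ℕ :=
  ∑ k ∈ (Finset.range (K + 1)).filter (fun k => Odd k), alphaK K k a

/-- `ᾱ_ev(a) = Σ_{k even} ᾱ_k(a)`. -/
def abarEv (K : ℕ) (a : Fin K → ℤ) : ℕ :=
  ∑ k ∈ (Finset.range (K + 1)).filter (fun k => Even k), abarK K k a

/-- `ᾱ_od(a) = Σ_{k odd} ᾱ_k(a)`. -/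
def abarOd (K : ℕ) (a : Fin K → ℤ) : ℕ :=
  ∑ k ∈ (Finset.range (K + 1)).filter (fun k => Odd k), abarK K k a

/-- `ᾱ(a) = Σ_{k=0}^K ᾱ_k(a)`. -/
def abarTot (K : ℕ) (a : Fin K → ℤ) : ℕ := ∑ k ∈ Finset.range (K + 1), abarK K k a

/-- `f_1(a) = Σ_i a_i`. -/
def f1 (K : ℕ) (a : Fin K → ℤ) : ℤ := ∑ i : Fin K, a i

/-- `f_2(a) = α_2(a) - ᾱ_2(a)`. -/
def f2 (K : ℕ) (a : Fin K → ℤ) : ℤ := (alphaK K 2 a : ℤ) - (abarK K 2 a : ℤ)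

/-- `φ(a) = Σ_{(a,b) ∈ E_K^+} (f_2(b) - f_2(a))` (loops included; they contribute `0`). -/
def phi (K : ℕ) (a : Fin K → ℤ) : ℤ :=
  ∑ p ∈ (Eplus K).filter (fun p => p.1 = a), (f2 K p.2 - f2 K p.1)

/-- `φ̄(a) = Σ_{(a,b) ∈ E_K^-} (f_2(b) - f_2(a))`. -/
def phibar (K : ℕ) (a : Fin K → ℤ) : ℤ :=
  ∑ p ∈ (Eminus K).filter (fun p => p.1 = a), (f2 K p.2 - f2 K p.1)

/-- The gradient vector field of a function `f` on the vertices: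
`∇f(a,b) = f(b) - f(a)` (it vanishes on loops). -/
noncomputable def gradE (K : ℕ) (f : (Fin K → ℤ) → ℝ) : Edge K → ℝ := fun e => f e.2.2 - f e.2.1

/-- Divergence of a vector field at a vertex: the sum of its values over all edges of
`E_K` leaving that vertex, loops included. -/
noncomputable def divE (K : ℕ) (S : Edge K → ℝ) (a : Fin K → ℤ) : ℝ :=
  ∑ e ∈ (EK K).filter (fun e => e.2.1 = a), S e

/-- Scalar product `⟨S,S'⟩ = (1/D_K) Σ_{e ∈ E_K} S(e) S'(e)` with `D_K = Card E_K`. -/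
noncomputable def innerE (K : ℕ) (S S' : Edge K → ℝ) : ℝ :=
  (∑ e ∈ EK K, S e * S' e) / ((EK K).card : ℝ)

/-- A vector field on `G_K`: antisymmetric on non-loop edges (reversing a non-loop edge
of `E_K` yields again an edge of `E_K`, with the opposite sign), with opposite values on
the two loops at each vertex. -/
def IsVectorField (K : ℕ) (S : Edge K → ℝ) : Prop :=
  (∀ e ∈ EK K, ∀ e' ∈ EK K, e.2.1 ≠ e.2.2 → e'.2.1 = e.2.2 → e'.2.2 = e.2.1 →
    S e = - S e') ∧
  (∀ a : Fin K → ℤ, (true, (a, a)) ∈ EK K → S (true, (a, a)) = - S (false, (a, a)))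

/-- The state space `𝒮_K` of `K`-step walks in `ℤ`. -/
def SK (K : ℕ) : Set (Fin (K + 1) → ℤ) :=
  {z | ∀ i : Fin K, |z i.succ - z i.castSucc| = 1}

/-- `w` is a possible next position for the constrained walk at `z`. -/
def Adjacent (K : ℕ) (z w : Fin (K + 1) → ℤ) : Prop :=
  w ∈ SK K ∧ ∀ i : Fin (K + 1), |w i - z i| = 1

/-- The shape map `δ(z) = (z⁽²⁾ - z⁽¹⁾, …, z⁽ᴷ⁺¹⁾ - z⁽ᴷ⁾)`. -/
def deltaS (K : ℕ) (z : Fin (K + 1) → ℤ) : Fin K → ℤ :=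
  fun i => z i.succ - z i.castSucc

end CRW

namespace CRWAux

/-- Number of nonzero entries of `c` among indices `< n`. -/
def N {K : ℕ} (c : Fin K → ℤ) (n : ℕ) : ℕ :=
  (Finset.univ.filter fun j : Fin K => (j : ℕ) < n ∧ c j ≠ 0).card

lemma N_zero {K : ℕ} (c : Fin K → ℤ) : N c 0 = 0 := by simp [N]

lemma N_succ {K : ℕ} (c : Fin K → ℤ) (n : ℕ) (h : n < K) :
    N c (n + 1) = if c ⟨n, h⟩ = 0 then N c n else N c n + 1 := by
  unfold N
  by_cases hc : c ⟨n, h⟩ = 0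
  · rw [if_pos hc]
    congr 1
    apply Finset.filter_congr
    intro j _
    constructor
    · rintro ⟨hj, hcj⟩
      refine ⟨?_, hcj⟩
      rcases Nat.lt_succ_iff_lt_or_eq.1 hj with h' | h'
      · exact h'
      · exact absurd (by rw [show j = (⟨n, h⟩ : Fin K) from Fin.ext h']; exact hc) hcj
    · rintro ⟨hj, hcj⟩; exact ⟨Nat.lt_succ_of_lt hj, hcj⟩
  · rw [if_neg hc]
    have he : (Finset.univ.filter fun j : Fin K => (j : ℕ) < n + 1 ∧ c j ≠ 0)
        = insert ⟨n, h⟩ (Finset.univ.filter fun j : Fin K => (j : ℕ) < n ∧ c j ≠ 0) := by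
      ext j
      simp only [Finset.mem_filter, Finset.mem_insert, Finset.mem_univ, true_and]
      constructor
      · rintro ⟨hj, hcj⟩
        rcases Nat.lt_succ_iff_lt_or_eq.1 hj with h' | h'
        · exact Or.inr ⟨h', hcj⟩
        · exact Or.inl (Fin.ext h')
      · rintro (rfl | ⟨hj, hcj⟩)
        · exact ⟨Nat.lt_succ_self n, hc⟩
        · exact ⟨Nat.lt_succ_of_lt hj, hcj⟩
    rw [he, Finset.card_insert_of_notMem]
    simp

lemma filter_lt_eq {K : ℕ} (c : Fin K → ℤ) (i : Fin K) :
    (Finset.univ.filter fun j : Fin K => j < i ∧ c j ≠ 0).card = N c i := by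
  unfold N
  congr 1

lemma mem_EK_iff (K : ℕ) (s : Bool) (p : (Fin K → ℤ) × (Fin K → ℤ)) :
    (s, p) ∈ CRW.EK K ↔ (if s then p ∈ CRW.Eplus K else p ∈ CRW.Eminus K) := by
  cases s <;> simp [CRW.EK, Prod.ext_iff]

lemma eplus_iff (K : ℕ) (a b : Fin K → ℤ) :
    (a, b) ∈ CRW.Eplus K ↔ (a ∈ CRW.V K ∧ b ∈ CRW.V K) ∧
      ∀ i : Fin K, b i - a i ≠ 0 →
        b i - a i = -2 * (-1 : ℤ) ^ (N (fun j => b j - a j) i) := by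
  rw [CRW.Eplus, Finset.mem_filter, Finset.mem_product]
  constructor
  · rintro ⟨⟨ha, hb⟩, hcond⟩
    refine ⟨⟨ha, hb⟩, ?_⟩
    intro i hi
    rcases hcond with heq | halt
    · exact absurd (by rw [show a = b from heq, sub_self]) hi
    · have h2 := halt i hi
      rw [filter_lt_eq (fun j => b j - a j) i] at h2
      rw [h2, pow_succ]; ring
  · rintro ⟨⟨ha, hb⟩, hcond⟩
    refine ⟨⟨ha, hb⟩, Or.inr ?_⟩
    intro i hi
    rw [filter_lt_eq (fun j => b j - a j) i, hcond i hi, pow_succ]; ring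

lemma eminus_iff (K : ℕ) (a b : Fin K → ℤ) :
    (a, b) ∈ CRW.Eminus K ↔ (a ∈ CRW.V K ∧ b ∈ CRW.V K) ∧
      ∀ i : Fin K, b i - a i ≠ 0 →
        b i - a i = 2 * (-1 : ℤ) ^ (N (fun j => b j - a j) i) := by
  rw [CRW.Eminus, Finset.mem_filter, Finset.mem_product]
  constructor
  · rintro ⟨⟨ha, hb⟩, hcond⟩
    refine ⟨⟨ha, hb⟩, ?_⟩
    intro i hi
    rcases hcond with heq | halt
    · exact absurd (by rw [show a = b from heq, sub_self]) hi
    · have h2 := halt i hi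
      rw [filter_lt_eq (fun j => b j - a j) i] at h2
      exact h2
  · rintro ⟨⟨ha, hb⟩, hcond⟩
    refine ⟨⟨ha, hb⟩, Or.inr ?_⟩
    intro i hi
    rw [filter_lt_eq (fun j => b j - a j) i]
    exact hcond i hi

lemma core {K : ℕ} (c : Fin K → ℤ) (D : ℕ → ℤ) (ε : ℤ) (hε : ε = 1 ∨ ε = -1)
    (hD0 : D 0 = ε)
    (hstep : ∀ n, (hn : n < K) → D (n + 1) = D n + c ⟨n, hn⟩) :
    (∀ n ≤ K, |D n| = 1) ↔
      ∀ i : Fin K, c i ≠ 0 → c i = -2 * ε * (-1 : ℤ) ^ (N c i) := by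
  have habs : ∀ x : ℤ, |x| = 1 ↔ x = 1 ∨ x = -1 := fun x => abs_eq (by norm_num)
  constructor
  · intro h
    have inv : ∀ n ≤ K, D n = ε * (-1 : ℤ) ^ (N c n) := by
      intro n
      induction n with
      | zero => intro _; rw [N_zero, pow_zero, mul_one, hD0]
      | succ n ih =>
        intro hn
        have hnK : n < K := hn
        rw [hstep n hnK, N_succ c n hnK]
        by_cases hz : c ⟨n, hnK⟩ = 0
        · rw [if_pos hz, hz, add_zero, ih (Nat.le_of_lt hnK)]
        · rw [if_neg hz]
          have h1 := (habs _).1 (h n (Nat.le_of_lt hnK))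
          have h2 := (habs _).1 (h (n + 1) hn)
          rw [hstep n hnK] at h2
          have hce : c ⟨n, hnK⟩ = -2 * D n := by
            rcases h1 with e1 | e1 <;> rcases h2 with e2 | e2 <;> omega
          rw [hce, ih (Nat.le_of_lt hnK), pow_succ]; ring
    intro i hi
    have hst := hstep i.val i.isLt
    rw [Fin.eta] at hst
    have h1 := (habs _).1 (h i.val (Nat.le_of_lt i.isLt))
    have h2 := (habs _).1 (h (i.val + 1) i.isLt)
    rw [hst] at h2
    have hce : c i = -2 * D i.val := by
      rcases h1 with e1 | e1 <;> rcases h2 with e2 | e2 <;> omega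
    rw [hce, inv i.val (Nat.le_of_lt i.isLt)]; ring
  · intro hAlt
    have inv : ∀ n ≤ K, D n = ε * (-1 : ℤ) ^ (N c n) := by
      intro n
      induction n with
      | zero => intro _; rw [N_zero, pow_zero, mul_one, hD0]
      | succ n ih =>
        intro hn
        have hnK : n < K := hn
        rw [hstep n hnK, N_succ c n hnK, ih (Nat.le_of_lt hnK)]
        by_cases hz : c ⟨n, hnK⟩ = 0
        · rw [if_pos hz, hz, add_zero]
        · rw [if_neg hz]
          have hv := hAlt ⟨n, hnK⟩ hz
          rw [hv, pow_succ]
          norm_num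
          ring
    intro n hn
    rw [inv n hn]
    rcases hε with rfl | rfl <;> simp [abs_mul, abs_pow]

end CRWAux

/-- Adjacency of configurations corresponds to edges of sign `ε = z₂⁽¹⁾ - z₁⁽¹⁾` between
the shapes, and the value of `A` on that edge is the height increment. -/
theorem statement2 (K : ℕ) (hK : 1 ≤ K)
    (z₁ z₂ : Fin (K + 1) → ℤ) (hz₁ : z₁ ∈ CRW.SK K) (hz₂ : z₂ ∈ CRW.SK K)
    (ε : ℤ) (hε : ε = 1 ∨ ε = -1) (hinc : z₂ 0 = z₁ 0 + ε) :
    ((∀ i : Fin (K + 1), |z₂ i - z₁ i| = 1) ↔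
      (decide (ε = 1), (CRW.deltaS K z₁, CRW.deltaS K z₂)) ∈ CRW.EK K) ∧
    ((∀ i : Fin (K + 1), |z₂ i - z₁ i| = 1) →
      CRW.A K (decide (ε = 1), (CRW.deltaS K z₁, CRW.deltaS K z₂)) =
        ((z₂ 0 - z₁ 0 : ℤ) : ℝ)) := by
  classical
  -- the "shape" difference
  set a : Fin K → ℤ := CRW.deltaS K z₁ with ha_def
  set b : Fin K → ℤ := CRW.deltaS K z₂ with hb_def
  -- the height difference, as a function on ℕ
  set D : ℕ → ℤ := fun n => if h : n < K + 1 then z₂ ⟨n, h⟩ - z₁ ⟨n, h⟩ else 0 with hD_def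
  have hD : ∀ i : Fin (K + 1), D i.val = z₂ i - z₁ i := by
    intro i
    simp [hD_def, i.isLt, Nat.lt_succ_iff.mp i.isLt]
  have hD0 : D 0 = ε := by
    have h0 := hD 0
    rw [Fin.val_zero] at h0
    rw [h0, hinc]; ring
  have hstep : ∀ n, (hn : n < K) → D (n + 1) = D n + (b ⟨n, hn⟩ - a ⟨n, hn⟩) := by
    intro n hn
    have h1 := hD ((⟨n, hn⟩ : Fin K).succ)
    have h2 := hD ((⟨n, hn⟩ : Fin K).castSucc)
    rw [Fin.val_succ] at h1
    rw [Fin.coe_castSucc] at h2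
    rw [h1, h2]
    simp only [hb_def, ha_def, CRW.deltaS]
    ring
  have haV : a ∈ CRW.V K := by
    rw [CRW.V, Fintype.mem_piFinset]
    intro i
    have h1 := hz₁ i
    rcases (abs_eq (by norm_num : (0:ℤ) ≤ 1)).1 h1 with h | h <;>
      simp [ha_def, CRW.deltaS, h]
  have hbV : b ∈ CRW.V K := by
    rw [CRW.V, Fintype.mem_piFinset]
    intro i
    have h1 := hz₂ i
    rcases (abs_eq (by norm_num : (0:ℤ) ≤ 1)).1 h1 with h | h <;>
      simp [hb_def, CRW.deltaS, h]
  have bridge : (∀ i : Fin (K + 1), |z₂ i - z₁ i| = 1) ↔ (∀ n ≤ K, |D n| = 1) := by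
    constructor
    · intro h n hn
      have hn' : n < K + 1 := Nat.lt_succ_of_le hn
      have := h ⟨n, hn'⟩
      have hd := hD ⟨n, hn'⟩
      rw [← hd] at this
      exact this
    · intro h i
      have := h i.val (Nat.le_of_lt_succ i.isLt)
      rw [hD i] at this
      exact this
  have hcore := CRWAux.core (fun j => b j - a j) D ε hε hD0 hstep
  constructor
  · rw [bridge, hcore]
    rcases hε with rfl | rfl
    · have hd : decide ((1 : ℤ) = 1) = true := by decide
      rw [hd, CRWAux.mem_EK_iff, if_pos rfl, CRWAux.eplus_iff]
      constructor
      · intro h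
        refine ⟨⟨haV, hbV⟩, ?_⟩
        intro i hi
        have h2 : b i - a i = -2 * (1:ℤ) * (-1 : ℤ) ^ (CRWAux.N (fun j => b j - a j) i) :=
          h i hi
        rw [h2]; ring
      · rintro ⟨-, h⟩ i hi
        have hi' : b i - a i ≠ 0 := hi
        show b i - a i = -2 * (1:ℤ) * (-1 : ℤ) ^ (CRWAux.N (fun j => b j - a j) i)
        rw [h i hi']; ring
    · have hd : decide ((-1 : ℤ) = 1) = false := by decide
      rw [hd, CRWAux.mem_EK_iff, if_neg (by simp), CRWAux.eminus_iff]
      constructor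
      · intro h
        refine ⟨⟨haV, hbV⟩, ?_⟩
        intro i hi
        have h2 : b i - a i = -2 * (-1:ℤ) * (-1 : ℤ) ^ (CRWAux.N (fun j => b j - a j) i) :=
          h i hi
        rw [h2]; ring
      · rintro ⟨-, h⟩ i hi
        have hi' : b i - a i ≠ 0 := hi
        show b i - a i = -2 * (-1:ℤ) * (-1 : ℤ) ^ (CRWAux.N (fun j => b j - a j) i)
        rw [h i hi']; ring
  · intro _
    have hz : z₂ 0 - z₁ 0 = ε := by rw [hinc]; ring
    rcases hε with rfl | rfl <;>
      simp [CRW.A, hz]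
end

section
/- For every integer K ≥ 1, the positive edge set on V_{K+1} is obtained from the edge sets on V_K by: E_{K+1}^+ = { (1a, 1b) : (a,b) ∈ E_K^+ } ∪ { ((−1)a, (−1)b) : (a,b) ∈ E_K^+ } ∪ { (1a, (−1)b) : (a,b) ∈ E_K^− }, where loops of E_K^± correspond to the loop-type edges in the first two sets and to non-loop crossing edges (1a, (−1)a) in the third set. -/
open Finset MeasureTheory Filter

namespace CRW

lemma filter_succ_card {K : ℕ} (P : Fin (K+1) → Prop) [DecidablePred P] :
    (Finset.univ.filter P).card =
      (if P 0 then 1 else 0) + (Finset.univ.filter fun j : Fin K => P j.succ).card := by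
  rw [Finset.card_filter, Finset.card_filter, Fin.sum_univ_succ]

lemma card_cons {K : ℕ} (x y : ℤ) (a b : Fin K → ℤ) (i : Fin K) :
    ((Finset.univ.filter fun j : Fin (K+1) =>
        j < i.succ ∧ (Fin.cons y b : Fin (K+1) → ℤ) j - (Fin.cons x a : Fin (K+1) → ℤ) j ≠ 0)).card
      = (if y - x ≠ 0 then 1 else 0) +
        ((Finset.univ.filter fun j : Fin K => j < i ∧ b j - a j ≠ 0)).card := by
  rw [filter_succ_card]
  simp [Fin.succ_pos, Fin.succ_lt_succ_iff]

lemma mem_V_cons {K : ℕ} (x : ℤ) (a : Fin K → ℤ) :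
    Fin.cons x a ∈ V (K+1) ↔ (x = -1 ∨ x = 1) ∧ a ∈ V K := by
  simp [V, Fintype.mem_piFinset, Fin.forall_fin_succ]

lemma altNeg_cons_same {K : ℕ} (x : ℤ) (a b : Fin K → ℤ) :
    AltNeg (K+1) (Fin.cons x a) (Fin.cons x b) ↔ AltNeg K a b := by
  constructor
  · intro h i hi
    have := h i.succ (by simpa using hi)
    rw [card_cons] at this
    simpa using this
  · intro h i
    induction i using Fin.cases with
    | zero => simp
    | succ j =>
      intro hj
      rw [card_cons]
      simp only [Fin.cons_succ] at hj ⊢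
      simpa using h j hj

lemma altNeg_cons_cross {K : ℕ} (a b : Fin K → ℤ) :
    AltNeg (K+1) (Fin.cons (1:ℤ) a) (Fin.cons (-1:ℤ) b) ↔ AltPos K a b := by
  have hpow : ∀ c : ℕ, (2:ℤ) * (-1)^(1+c+1) = 2 * (-1)^c := by
    intro c; rw [pow_add, pow_add]; ring
  constructor
  · intro h i hi
    have := h i.succ (by simpa using hi)
    rw [card_cons] at this
    simp only [Fin.cons_succ] at this
    norm_num at this
    rw [this, hpow]
  · intro h i
    induction i using Fin.cases with
    | zero =>
      intro _
      simp [Fin.not_lt_zero]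
    | succ j =>
      intro hj
      rw [card_cons]
      simp only [Fin.cons_succ] at hj ⊢
      norm_num
      rw [hpow]
      exact h j hj

lemma not_altNeg_cross' {K : ℕ} (a b : Fin K → ℤ) :
    ¬ AltNeg (K+1) (Fin.cons (-1:ℤ) a) (Fin.cons (1:ℤ) b) := by
  intro h
  have := h 0 (by norm_num)
  simp [Fin.not_lt_zero] at this


lemma altPos_of_eq {K : ℕ} (a : Fin K → ℤ) : AltPos K a a := by
  intro i hi; simp at hi

end CRW

/-- Inductive construction of the positive edge set `E_{K+1}^+` from `E_K^±`. -/
theorem statement3 (K : ℕ) (hK : 1 ≤ K) :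
    CRW.Eplus (K + 1) =
      ((CRW.Eplus K).image fun p => (Fin.cons 1 p.1, Fin.cons 1 p.2)) ∪
      ((CRW.Eplus K).image fun p => (Fin.cons (-1) p.1, Fin.cons (-1) p.2)) ∪
      ((CRW.Eminus K).image fun p => (Fin.cons 1 p.1, Fin.cons (-1) p.2)) := by
  ext ⟨c, e⟩
  simp only [CRW.Eplus, CRW.Eminus, Finset.mem_union, Finset.mem_image, Finset.mem_filter,
    Finset.mem_product, Prod.mk.injEq, Prod.exists]
  constructor
  · rintro ⟨⟨hc, he⟩, hor⟩
    have hcc := (CRW.mem_V_cons (c 0) (Fin.tail c)).mp (by rwa [Fin.cons_self_tail])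
    have hee := (CRW.mem_V_cons (e 0) (Fin.tail e)).mp (by rwa [Fin.cons_self_tail])
    have hc' : Fin.cons (c 0) (Fin.tail c) = c := Fin.cons_self_tail c
    have he' : Fin.cons (e 0) (Fin.tail e) = e := Fin.cons_self_tail e
    rcases hcc.1 with h1 | h1 <;> rcases hee.1 with h2 | h2
    · -- c0 = -1, e0 = -1
      refine Or.inl (Or.inr ⟨Fin.tail c, Fin.tail e, ⟨⟨hcc.2, hee.2⟩, ?_⟩,
        by rw [← h1, hc'], by rw [← h2, he']⟩)
      rcases hor with h | h
      · exact Or.inl (congrArg Fin.tail h)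
      · refine Or.inr ((CRW.altNeg_cons_same (c 0) _ _).mp ?_)
        have heN : Fin.cons (c 0) (Fin.tail e) = e := by rw [h1, ← h2]; exact he'
        rw [hc', heN]; exact h
    · -- c0 = -1, e0 = 1 : impossible
      exfalso
      rcases hor with h | h
      · rw [h] at h1; rw [h1] at h2; norm_num at h2
      · exact CRW.not_altNeg_cross' (Fin.tail c) (Fin.tail e)
          (by
            have hcN : Fin.cons (-1 : ℤ) (Fin.tail c) = c := by rw [← h1]; exact hc'
            have heN : Fin.cons (1 : ℤ) (Fin.tail e) = e := by rw [← h2]; exact he'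
            rw [hcN, heN]; exact h)
    · -- c0 = 1, e0 = -1 : crossing, Eminus
      refine Or.inr ⟨Fin.tail c, Fin.tail e, ⟨⟨hcc.2, hee.2⟩, ?_⟩,
        by rw [← h1, hc'], by rw [← h2, he']⟩
      rcases hor with h | h
      · rw [h] at h1; rw [h1] at h2; norm_num at h2
      · exact Or.inr ((CRW.altNeg_cons_cross _ _).mp (by
          have hcN : Fin.cons (1 : ℤ) (Fin.tail c) = c := by rw [← h1]; exact hc'
          have heN : Fin.cons (-1 : ℤ) (Fin.tail e) = e := by rw [← h2]; exact he'
          rw [hcN, heN]; exact h))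
    · -- c0 = 1, e0 = 1
      refine Or.inl (Or.inl ⟨Fin.tail c, Fin.tail e, ⟨⟨hcc.2, hee.2⟩, ?_⟩,
        by rw [← h1, hc'], by rw [← h2, he']⟩)
      rcases hor with h | h
      · exact Or.inl (congrArg Fin.tail h)
      · refine Or.inr ((CRW.altNeg_cons_same (c 0) _ _).mp ?_)
        have heN : Fin.cons (c 0) (Fin.tail e) = e := by rw [h1, ← h2]; exact he'
        rw [hc', heN]; exact h
  · rintro ((⟨a, b, ⟨⟨ha, hb⟩, hab⟩, hc, he⟩ | ⟨a, b, ⟨⟨ha, hb⟩, hab⟩, hc, he⟩) |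
      ⟨a, b, ⟨⟨ha, hb⟩, hab⟩, hc, he⟩) <;> subst hc <;> subst he
    · refine ⟨⟨(CRW.mem_V_cons _ _).mpr ⟨Or.inr rfl, ha⟩, (CRW.mem_V_cons _ _).mpr ⟨Or.inr rfl, hb⟩⟩, ?_⟩
      rcases hab with h | h
      · exact Or.inl (by rw [h])
      · exact Or.inr ((CRW.altNeg_cons_same 1 a b).mpr h)
    · refine ⟨⟨(CRW.mem_V_cons _ _).mpr ⟨Or.inl rfl, ha⟩, (CRW.mem_V_cons _ _).mpr ⟨Or.inl rfl, hb⟩⟩, ?_⟩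
      rcases hab with h | h
      · exact Or.inl (by rw [h])
      · exact Or.inr ((CRW.altNeg_cons_same (-1) a b).mpr h)
    · refine ⟨⟨(CRW.mem_V_cons _ _).mpr ⟨Or.inr rfl, ha⟩, (CRW.mem_V_cons _ _).mpr ⟨Or.inl rfl, hb⟩⟩, ?_⟩
      refine Or.inr ((CRW.altNeg_cons_cross a b).mpr ?_)
      rcases hab with h | h
      · exact h ▸ CRW.altPos_of_eq b
      · exact h
end

section
/- For every integer K ≥ 1, the number of elements of E_K^+ (including the loops) equals 3^K, the number of elements of E_K^− equals 3^K, and consequently D_K = Card(E_K) = 2·3^K. -/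
open Finset MeasureTheory Filter

namespace CRWAux

/-- Generic alternation predicate with sign `ε`. -/
def Alt (K : ℕ) (ε : ℤ) (a b : Fin K → ℤ) : Prop :=
  ∀ i : Fin K, b i - a i ≠ 0 →
    b i - a i =
      2 * ε * (-1 : ℤ) ^ (((Finset.univ.filter fun j : Fin K => j < i ∧ b j - a j ≠ 0)).card)

instance (K : ℕ) (ε : ℤ) (a b : Fin K → ℤ) : Decidable (Alt K ε a b) := by
  unfold Alt; infer_instance

def Egen (K : ℕ) (ε : ℤ) : Finset ((Fin K → ℤ) × (Fin K → ℤ)) :=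
  ((CRW.V K) ×ˢ (CRW.V K)).filter fun p => p.1 = p.2 ∨ Alt K ε p.1 p.2

lemma mem_V {K : ℕ} {a : Fin K → ℤ} : a ∈ CRW.V K ↔ ∀ i, a i = -1 ∨ a i = 1 := by
  simp [CRW.V, Fintype.mem_piFinset]

/-- encoding of an edge as a function `Fin K → Fin 3`. -/
def enc (K : ℕ) (p : (Fin K → ℤ) × (Fin K → ℤ)) : Fin K → Fin 3 :=
  fun i => if p.2 i - p.1 i ≠ 0 then 2 else if p.1 i = 1 then 1 else 0

def dec (K : ℕ) (ε : ℤ) (f : Fin K → Fin 3) : (Fin K → ℤ) × (Fin K → ℤ) :=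
  (fun i => if f i = 2 then
      -ε * (-1 : ℤ) ^ ((Finset.univ.filter fun j : Fin K => j < i ∧ f j = 2)).card
    else if f i = 1 then 1 else -1,
   fun i => if f i = 2 then
      ε * (-1 : ℤ) ^ ((Finset.univ.filter fun j : Fin K => j < i ∧ f j = 2)).card
    else if f i = 1 then 1 else -1)

lemma enc_eq_two {K : ℕ} {p : (Fin K → ℤ) × (Fin K → ℤ)} {i : Fin K} :
    enc K p i = 2 ↔ p.2 i - p.1 i ≠ 0 := by
  unfold enc
  by_cases h : p.2 i - p.1 i ≠ 0
  · simp [h]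
  · simp only [if_neg h]
    split_ifs <;> simp [h, Fin.ext_iff]

lemma pow_neg_one_cases (c : ℕ) : ((-1 : ℤ)) ^ c = 1 ∨ ((-1 : ℤ)) ^ c = -1 := by
  rcases Nat.even_or_odd c with h | h
  · exact Or.inl (Even.neg_one_pow h)
  · exact Or.inr (Odd.neg_one_pow h)

lemma dec_diff {K : ℕ} {ε : ℤ} (f : Fin K → Fin 3) (i : Fin K) :
    (dec K ε f).2 i - (dec K ε f).1 i =
      if f i = 2 then
        2 * ε * (-1 : ℤ) ^ ((Finset.univ.filter fun j : Fin K => j < i ∧ f j = 2)).card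
      else 0 := by
  unfold dec
  dsimp only
  split_ifs with h <;> ring

lemma dec_diff_ne {K : ℕ} {ε : ℤ} (hε : ε = 1 ∨ ε = -1) (f : Fin K → Fin 3) (i : Fin K) :
    (dec K ε f).2 i - (dec K ε f).1 i ≠ 0 ↔ f i = 2 := by
  rw [dec_diff]
  split_ifs with h
  · simp only [h, iff_true]
    rcases pow_neg_one_cases ((Finset.univ.filter fun j : Fin K => j < i ∧ f j = 2)).card with
      hp | hp <;> rcases hε with rfl | rfl <;> rw [hp] <;> norm_num
  · simp [h]

lemma fin3_cases (x : Fin 3) : x = 0 ∨ x = 1 ∨ x = 2 := by omega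

lemma card_Egen (K : ℕ) {ε : ℤ} (hε : ε = 1 ∨ ε = -1) : (Egen K ε).card = 3 ^ K := by
  have key : (Egen K ε).card = (Finset.univ : Finset (Fin K → Fin 3)).card := by
    apply Finset.card_nbij' (enc K) (dec K ε)
    · intro p _; exact Finset.mem_univ _
    · intro f _
      -- dec f ∈ Egen
      simp only [Finset.mem_coe, Egen, Finset.mem_filter, Finset.mem_product]
      refine ⟨⟨?_, ?_⟩, Or.inr ?_⟩
      · rw [mem_V]
        intro i
        unfold dec
        dsimp only
        split_ifs with h1 h2
        · rcases pow_neg_one_cases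
            ((Finset.univ.filter fun j : Fin K => j < i ∧ f j = 2)).card with hp | hp <;>
            rcases hε with rfl | rfl <;> rw [hp] <;> norm_num
        · right; rfl
        · left; rfl
      · rw [mem_V]
        intro i
        unfold dec
        dsimp only
        split_ifs with h1 h2
        · rcases pow_neg_one_cases
            ((Finset.univ.filter fun j : Fin K => j < i ∧ f j = 2)).card with hp | hp <;>
            rcases hε with rfl | rfl <;> rw [hp] <;> norm_num
        · right; rfl
        · left; rfl
      · intro i hi
        have hf2 : f i = 2 := (dec_diff_ne hε f i).mp hi
        have hfil : (Finset.univ.filter fun j : Fin K =>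
              j < i ∧ (dec K ε f).2 j - (dec K ε f).1 j ≠ 0) =
            (Finset.univ.filter fun j : Fin K => j < i ∧ f j = 2) := by
          apply Finset.filter_congr
          intro j _
          simp [dec_diff_ne hε]
        rw [hfil, dec_diff, if_pos hf2]
    · intro p hp
      -- dec (enc p) = p
      simp only [Finset.mem_coe, Egen, Finset.mem_filter, Finset.mem_product] at hp
      obtain ⟨⟨ha, hb⟩, hor⟩ := hp
      have halt : Alt K ε p.1 p.2 := by
        rcases hor with heq | h
        · intro i hi; rw [heq] at hi; simp at hi
        · exact h
      have hfil : ∀ i : Fin K,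
          (Finset.univ.filter fun j : Fin K => j < i ∧ enc K p j = 2) =
          (Finset.univ.filter fun j : Fin K => j < i ∧ p.2 j - p.1 j ≠ 0) := by
        intro i
        apply Finset.filter_congr
        intro j _
        simp [enc_eq_two]
      have ha' := mem_V.mp ha
      have hb' := mem_V.mp hb
      have comp : ∀ i : Fin K, (dec K ε (enc K p)).1 i = p.1 i ∧
          (dec K ε (enc K p)).2 i = p.2 i := by
        intro i
        unfold dec
        dsimp only
        by_cases hne : p.2 i - p.1 i ≠ 0
        · have h2 : enc K p i = 2 := enc_eq_two.mpr hne
          rw [if_pos h2, if_pos h2, hfil i]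
          have heq := halt i hne
          set c := ((Finset.univ.filter fun j : Fin K => j < i ∧ p.2 j - p.1 j ≠ 0)).card
          rcases pow_neg_one_cases c with hp | hp <;> rw [hp] at heq ⊢ <;>
            rcases hε with rfl | rfl <;>
            rcases ha' i with h1 | h1 <;> rcases hb' i with h2 | h2 <;>
            rw [h1, h2] at heq ⊢ <;> omega
        · push_neg at hne
          have hne' : ¬ (p.2 i - p.1 i ≠ 0) := by simp [hne]
          have hbe : p.2 i = p.1 i := by omega
          have h2 : enc K p i ≠ 2 := fun hc => hne' (enc_eq_two.mp hc)
          rw [if_neg h2, if_neg h2]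
          unfold enc
          rw [if_neg hne']
          rcases ha' i with h1 | h1 <;> rw [h1] <;> norm_num <;> omega
      have c1 : (dec K ε (enc K p)).1 = p.1 := funext fun i => (comp i).1
      have c2 : (dec K ε (enc K p)).2 = p.2 := funext fun i => (comp i).2
      exact Prod.ext c1 c2
    · intro f _
      -- enc (dec f) = f
      funext i
      have hd := dec_diff_ne (K := K) hε f i
      rcases fin3_cases (f i) with h | h | h
      · have hne : ¬ ((dec K ε f).2 i - (dec K ε f).1 i ≠ 0) := fun hc => by
          have := hd.mp hc; omega
        have h1 : (dec K ε f).1 i = -1 := by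
          unfold dec; dsimp only
          rw [if_neg (by omega), if_neg (by omega)]
        unfold enc
        rw [if_neg hne, h1, if_neg (by norm_num)]
        omega
      · have hne : ¬ ((dec K ε f).2 i - (dec K ε f).1 i ≠ 0) := fun hc => by
          have := hd.mp hc; omega
        have h1 : (dec K ε f).1 i = 1 := by
          unfold dec; dsimp only
          rw [if_neg (by omega), if_pos h]
        unfold enc
        rw [if_neg hne, h1, if_pos rfl]
        omega
      · have hne : ((dec K ε f).2 i - (dec K ε f).1 i ≠ 0) := hd.mpr h
        unfold enc
        rw [if_pos hne, h]
  rw [key]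
  simp

lemma Eplus_eq (K : ℕ) : CRW.Eplus K = Egen K (-1) := by
  unfold CRW.Eplus Egen
  apply Finset.filter_congr
  intro p _
  have : CRW.AltNeg K p.1 p.2 ↔ Alt K (-1) p.1 p.2 := by
    unfold CRW.AltNeg Alt
    apply forall_congr'
    intro i
    apply imp_congr Iff.rfl
    rw [pow_succ]
    constructor <;> intro h <;> rw [h] <;> ring
  simp [this]

lemma Eminus_eq (K : ℕ) : CRW.Eminus K = Egen K 1 := by
  unfold CRW.Eminus Egen
  apply Finset.filter_congr
  intro p _
  have : CRW.AltPos K p.1 p.2 ↔ Alt K 1 p.1 p.2 := by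
    unfold CRW.AltPos Alt
    apply forall_congr'
    intro i
    apply imp_congr Iff.rfl
    constructor <;> intro h <;> rw [h] <;> ring
  simp [this]

end CRWAux

/-- `Card E_K^+ = Card E_K^- = 3^K` and `D_K = Card E_K = 2·3^K`. -/
theorem statement4 (K : ℕ) (hK : 1 ≤ K) :
    (CRW.Eplus K).card = 3 ^ K ∧ (CRW.Eminus K).card = 3 ^ K ∧
      (CRW.EK K).card = 2 * 3 ^ K := by
  have h1 : (CRW.Eplus K).card = 3 ^ K := by
    rw [CRWAux.Eplus_eq]; exact CRWAux.card_Egen K (Or.inr rfl)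
  have h2 : (CRW.Eminus K).card = 3 ^ K := by
    rw [CRWAux.Eminus_eq]; exact CRWAux.card_Egen K (Or.inl rfl)
  refine ⟨h1, h2, ?_⟩
  unfold CRW.EK
  rw [Finset.card_union_of_disjoint, Finset.card_image_of_injective,
    Finset.card_image_of_injective, h1, h2]
  · ring
  · intro a b hab; simpa using hab
  · intro a b hab; simpa using hab
  · simp [Finset.disjoint_left]
end

section
/- For every integer K ≥ 1, the number δ_K of edges of E_K^+ of the form (1a, (−1)b) with a, b ∈ V_{K−1} (edges crossing from the facet of vertices with first coordinate 1 to the facet of vertices with first coordinate −1) equals 3^{K−1}. -/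
open Finset MeasureTheory Filter

namespace S5

/-- Count of zero entries of `t` before index `i`. -/
def c (K : ℕ) (t : Fin K → ℤ) (i : Fin K) : ℕ :=
  (Finset.univ.filter fun j : Fin K => j < i ∧ t j = 0).card

def aF (K : ℕ) (t : Fin K → ℤ) : Fin K → ℤ :=
  fun i => if t i = 0 then (-1) ^ (c K t i) else t i

def bF (K : ℕ) (t : Fin K → ℤ) : Fin K → ℤ :=
  fun i => if t i = 0 then (-1) ^ (c K t i + 1) else t i

def tF (K : ℕ) (p : (Fin K → ℤ) × (Fin K → ℤ)) : Fin K → ℤ :=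
  fun i => if p.2 i = p.1 i then p.1 i else 0

/-- Target finset of encodings. -/
def T (K : ℕ) : Finset (Fin K → ℤ) :=
  Fintype.piFinset fun i : Fin K =>
    if (i : ℕ) = 0 then ({0} : Finset ℤ) else ({-1, 0, 1} : Finset ℤ)

lemma neg_one_pow_cases (n : ℕ) : (-1 : ℤ) ^ n = 1 ∨ (-1 : ℤ) ^ n = -1 := by
  rcases Nat.even_or_odd n with h | h
  · exact Or.inl h.neg_one_pow
  · exact Or.inr h.neg_one_pow

lemma diff_eq (K : ℕ) (t : Fin K → ℤ) (i : Fin K) :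
    bF K t i - aF K t i = if t i = 0 then 2 * (-1 : ℤ) ^ (c K t i + 1) else 0 := by
  by_cases h : t i = 0
  · simp only [aF, bF, if_pos h]
    rw [pow_succ]; ring
  · simp [aF, bF, h]

lemma diff_ne_iff (K : ℕ) (t : Fin K → ℤ) (i : Fin K) :
    bF K t i - aF K t i ≠ 0 ↔ t i = 0 := by
  constructor
  · intro hne
    by_contra h
    rw [diff_eq, if_neg h] at hne
    exact hne rfl
  · intro h
    rw [diff_eq, if_pos h]
    rcases neg_one_pow_cases (c K t i + 1) with he | he <;> rw [he] <;> norm_num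

lemma c_eq (K : ℕ) (t : Fin K → ℤ) (i : Fin K) :
    (Finset.univ.filter fun j : Fin K =>
      j < i ∧ bF K t j - aF K t j ≠ 0).card = c K t i := by
  unfold c
  congr 1
  apply Finset.filter_congr
  intro j _
  rw [diff_ne_iff]

lemma altNeg_aF_bF (K : ℕ) (t : Fin K → ℤ) : CRW.AltNeg K (aF K t) (bF K t) := by
  intro i hi
  rw [diff_ne_iff] at hi
  rw [c_eq, diff_eq, if_pos hi]

lemma mem_T_iff (K : ℕ) (t : Fin K → ℤ) :
    t ∈ T K ↔ ∀ i : Fin K, if (i : ℕ) = 0 then t i = 0 else t i = -1 ∨ t i = 0 ∨ t i = 1 := by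
  rw [T, Fintype.mem_piFinset]
  apply forall_congr'
  intro i
  by_cases h : (i : ℕ) = 0 <;> simp [h]

end S5

/-- The number `δ_K` of positive edges crossing from the facet `{first coordinate = 1}`
to the facet `{first coordinate = -1}` equals `3^(K-1)`. -/
theorem statement5 (K : ℕ) (hK : 1 ≤ K) :
    ((CRW.Eplus K).filter fun p => p.1 ⟨0, hK⟩ = 1 ∧ p.2 ⟨0, hK⟩ = -1).card =
      3 ^ (K - 1) := by
  classical
  set i0 : Fin K := ⟨0, hK⟩ with hi0
  -- membership in V
  have memV : ∀ v : Fin K → ℤ, v ∈ CRW.V K ↔ ∀ i, v i = -1 ∨ v i = 1 := by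
    intro v
    rw [CRW.V, Fintype.mem_piFinset]
    apply forall_congr'
    intro i
    simp
  -- Step 1: bijection with S5.T K
  have hbij :
      ((CRW.Eplus K).filter fun p => p.1 i0 = 1 ∧ p.2 i0 = -1).card = (S5.T K).card := by
    apply Finset.card_bij' (fun p _ => S5.tF K p) (fun t _ => (S5.aF K t, S5.bF K t))
    · -- forward map lands in T
      intro p hp
      rw [Finset.mem_filter, CRW.Eplus, Finset.mem_filter, Finset.mem_product] at hp
      obtain ⟨⟨⟨h1V, h2V⟩, _⟩, h10, h20⟩ := hp
      rw [S5.mem_T_iff]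
      intro i
      by_cases h : (i : ℕ) = 0
      · have hii : i = i0 := Fin.ext h
        subst hii
        simp only [h, if_true, S5.tF]
        rw [h10, h20]
        norm_num
      · simp only [h, if_false, S5.tF]
        by_cases hb : p.2 i = p.1 i
        · rw [if_pos hb]
          rcases (memV p.1).1 h1V i with h' | h' <;> simp [h']
        · rw [if_neg hb]
          tauto
    · -- inverse map lands in the filtered set
      intro t ht
      rw [S5.mem_T_iff] at ht
      have ht0 : t i0 = 0 := by have := ht i0; simpa [hi0] using this
      have hc0 : S5.c K t i0 = 0 := by
        rw [S5.c, Finset.card_eq_zero, Finset.filter_eq_empty_iff]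
        intro j _
        simp [Fin.lt_def, hi0]
      rw [Finset.mem_filter, CRW.Eplus, Finset.mem_filter, Finset.mem_product]
      refine ⟨⟨⟨?_, ?_⟩, Or.inr (S5.altNeg_aF_bF K t)⟩, ?_, ?_⟩
      · rw [memV]
        intro i
        have hti : t i = -1 ∨ t i = 0 ∨ t i = 1 := by
          by_cases h0 : (i : ℕ) = 0
          · have := ht i; rw [if_pos h0] at this; tauto
          · have := ht i; rw [if_neg h0] at this; exact this
        by_cases h : t i = 0
        · simp only [S5.aF, if_pos h]
          exact (S5.neg_one_pow_cases _).symm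
        · simp only [S5.aF, if_neg h]
          tauto
      · rw [memV]
        intro i
        have hti : t i = -1 ∨ t i = 0 ∨ t i = 1 := by
          by_cases h0 : (i : ℕ) = 0
          · have := ht i; rw [if_pos h0] at this; tauto
          · have := ht i; rw [if_neg h0] at this; exact this
        by_cases h : t i = 0
        · simp only [S5.bF, if_pos h]
          exact (S5.neg_one_pow_cases _).symm
        · simp only [S5.bF, if_neg h]
          tauto
      · simp [S5.aF, ht0, hc0]
      · simp [S5.bF, ht0, hc0]
    · -- left inverse
      intro p hp
      rw [Finset.mem_filter, CRW.Eplus, Finset.mem_filter, Finset.mem_product] at hp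
      obtain ⟨⟨⟨h1V, h2V⟩, halt⟩, h10, h20⟩ := hp
      have hne : p.1 ≠ p.2 := by
        intro h
        rw [h, h20] at h10
        norm_num at h10
      have hAlt : CRW.AltNeg K p.1 p.2 := halt.resolve_left hne
      have hz : ∀ j, S5.tF K p j = 0 ↔ p.2 j ≠ p.1 j := by
        intro j
        rcases (memV p.1).1 h1V j with h' | h' <;>
          by_cases hb : p.2 j = p.1 j <;> simp [S5.tF, hb, h']
      have hcnt : ∀ i, S5.c K (S5.tF K p) i =
          (Finset.univ.filter fun j : Fin K => j < i ∧ p.2 j - p.1 j ≠ 0).card := by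
        intro i
        unfold S5.c
        congr 1
        apply Finset.filter_congr
        intro j _
        rw [hz j, sub_ne_zero]
      have hcoord : ∀ i, S5.aF K (S5.tF K p) i = p.1 i ∧ S5.bF K (S5.tF K p) i = p.2 i := by
        intro i
        by_cases hb : p.2 i = p.1 i
        · have hne0 : p.1 i ≠ 0 := by
            rcases (memV p.1).1 h1V i with h' | h' <;> simp [h']
          have htv : S5.tF K p i = p.1 i := by simp [S5.tF, hb]
          constructor
          · simp only [S5.aF, htv]
            rw [if_neg hne0]
          · simp only [S5.bF, htv]
            rw [if_neg hne0, hb]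
        · have hzz : S5.tF K p i = 0 := (hz i).2 hb
          have hd : p.2 i - p.1 i ≠ 0 := sub_ne_zero.2 hb
          have halti := hAlt i hd
          rw [← hcnt i] at halti
          simp only [S5.aF, S5.bF, if_pos hzz]
          rw [pow_succ] at halti ⊢
          rcases S5.neg_one_pow_cases (S5.c K (S5.tF K p) i) with he | he <;>
            rw [he] at halti ⊢ <;>
            rcases (memV p.1).1 h1V i with h1 | h1 <;>
            rcases (memV p.2).1 h2V i with h2 | h2 <;>
            (revert halti; norm_num [h1, h2])
      have h1 : S5.aF K (S5.tF K p) = p.1 := funext fun i => (hcoord i).1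
      have h2 : S5.bF K (S5.tF K p) = p.2 := funext fun i => (hcoord i).2
      have : (S5.aF K (S5.tF K p), S5.bF K (S5.tF K p)) = (p.1, p.2) := by rw [h1, h2]
      simpa using this
    · -- right inverse
      intro t ht
      funext i
      by_cases h : t i = 0
      · have hne : S5.bF K t i ≠ S5.aF K t i := by
          rw [← sub_ne_zero, S5.diff_ne_iff]
          exact h
        simp [S5.tF, hne, h]
      · simp [S5.tF, S5.aF, S5.bF, h]
  rw [hbij]
  -- Step 2: card of T
  rw [S5.T, Fintype.card_piFinset]
  have hcard : ∀ i : Fin K,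
      ((if (i : ℕ) = 0 then ({0} : Finset ℤ) else ({-1, 0, 1} : Finset ℤ))).card =
        if (i : ℕ) = 0 then 1 else 3 := by
    intro i
    by_cases h : (i : ℕ) = 0 <;> simp [h]
  rw [Finset.prod_congr rfl fun i _ => hcard i]
  rw [← Finset.mul_prod_erase Finset.univ _ (Finset.mem_univ i0)]
  have : ∀ i ∈ Finset.univ.erase i0, (if (i : ℕ) = 0 then 1 else 3) = 3 := by
    intro i hi
    have : i ≠ i0 := (Finset.mem_erase.1 hi).1
    have h0 : (i : ℕ) ≠ 0 := fun h => this (Fin.ext h)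
    simp [h0]
  rw [Finset.prod_congr rfl this, Finset.prod_const]
  simp [Finset.card_erase_of_mem, hi0]
end

section
/- For every a ∈ V_K, the divergence of the gradient of f_1 satisfies (∇·(∇f_1))(a) = −2(α_od(a) − ᾱ_od(a)). -/
open Finset MeasureTheory Filter

section Aux

private lemma sum_count_filter {ι : Type*} [LinearOrder ι] (g : ℕ → ℤ) (s : Finset ι) :
    ∑ i ∈ s, g ((s.filter fun j => j < i).card) = ∑ j ∈ Finset.range s.card, g j := by
  classical
  induction s using Finset.strongInduction with
  | _ s ih =>
    rcases s.eq_empty_or_nonempty with rfl | hne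
    · simp
    · set m := s.max' hne with hmdef
      have hm : m ∈ s := s.max'_mem hne
      have hfm : (s.filter fun j => j < m) = s.erase m := by
        ext x
        simp only [Finset.mem_filter, Finset.mem_erase]
        constructor
        · rintro ⟨hx, hlt⟩; exact ⟨ne_of_lt hlt, hx⟩
        · rintro ⟨hne', hx⟩; exact ⟨hx, lt_of_le_of_ne (s.le_max' x hx) hne'⟩
      have hfi : ∀ i ∈ s.erase m,
          (s.filter fun j => j < i) = ((s.erase m).filter fun j => j < i) := by
        intro i hi
        ext x
        simp only [Finset.mem_filter, Finset.mem_erase]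
        constructor
        · rintro ⟨hx, hlt⟩
          refine ⟨⟨fun hxm => ?_, hx⟩, hlt⟩
          subst hxm
          exact absurd (lt_of_lt_of_le hlt (s.le_max' i (Finset.mem_of_mem_erase hi)))
            (lt_irrefl _)
        · rintro ⟨⟨_, hx⟩, hlt⟩; exact ⟨hx, hlt⟩
      have hcard : s.card = (s.erase m).card + 1 := by
        rw [Finset.card_erase_of_mem hm]
        have : 0 < s.card := Finset.card_pos.mpr hne
        omega
      rw [← Finset.add_sum_erase s _ hm, hfm,
        Finset.sum_congr rfl (fun i hi => by rw [hfi i hi]),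
        ih (s.erase m) (Finset.erase_ssubset hm), hcard, Finset.sum_range_succ]
      ring

private lemma sum_alt_neg (k : ℕ) :
    ∑ j ∈ Finset.range k, (2 : ℤ) * (-1) ^ (j + 1) = if Odd k then -2 else 0 := by
  induction k with
  | zero => simp
  | succ n ih =>
    rw [Finset.sum_range_succ, ih, pow_succ]
    rcases Nat.even_or_odd n with h | h
    · rw [if_neg (by simpa using h), if_pos (by simp [Nat.odd_add_one, h]), h.neg_one_pow]
      ring
    · rw [if_pos h, if_neg (by simp [Nat.odd_add_one, h]), h.neg_one_pow]
      ring

private lemma sum_alt_pos (k : ℕ) :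
    ∑ j ∈ Finset.range k, (2 : ℤ) * (-1) ^ j = if Odd k then 2 else 0 := by
  induction k with
  | zero => simp
  | succ n ih =>
    rw [Finset.sum_range_succ, ih]
    rcases Nat.even_or_odd n with h | h
    · rw [if_neg (by simpa using h), if_pos (by simp [Nat.odd_add_one, h]), h.neg_one_pow]
      ring
    · rw [if_pos h, if_neg (by simp [Nat.odd_add_one, h]), h.neg_one_pow]
      ring

private lemma altneg_of_mem {K : ℕ} {a b : Fin K → ℤ} (h : (a, b) ∈ CRW.Eplus K) :
    CRW.AltNeg K a b := by
  simp only [CRW.Eplus, Finset.mem_filter] at h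
  rcases h.2 with h2 | h2
  · intro i hi
    exfalso
    apply hi
    have : a = b := h2
    rw [← this]
    ring
  · exact h2

private lemma altpos_of_mem {K : ℕ} {a b : Fin K → ℤ} (h : (a, b) ∈ CRW.Eminus K) :
    CRW.AltPos K a b := by
  simp only [CRW.Eminus, Finset.mem_filter] at h
  rcases h.2 with h2 | h2
  · intro i hi
    exfalso
    apply hi
    have : a = b := h2
    rw [← this]
    ring
  · exact h2

private lemma f1_diff_altneg {K : ℕ} {a b : Fin K → ℤ} (h : CRW.AltNeg K a b) :
    CRW.f1 K b - CRW.f1 K a =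
      if Odd ((Finset.univ.filter fun i : Fin K => b i ≠ a i).card) then -2 else 0 := by
  classical
  have hset : (Finset.univ.filter fun i : Fin K => b i ≠ a i)
      = (Finset.univ.filter fun i : Fin K => b i - a i ≠ 0) := by
    apply Finset.filter_congr
    intro i _
    simp [sub_ne_zero]
  set s := Finset.univ.filter fun i : Fin K => b i - a i ≠ 0 with hs
  have h1 : CRW.f1 K b - CRW.f1 K a = ∑ i ∈ s, (b i - a i) := by
    rw [CRW.f1, CRW.f1, ← Finset.sum_sub_distrib, hs]
    exact (Finset.sum_filter_ne_zero _).symm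
  have h2 : ∀ i ∈ s, b i - a i = 2 * (-1 : ℤ) ^ ((s.filter fun j => j < i).card + 1) := by
    intro i hi
    have hi' : b i - a i ≠ 0 := by
      rw [hs] at hi
      simpa using hi
    have hfil : (Finset.univ.filter fun j : Fin K => j < i ∧ b j - a j ≠ 0)
        = s.filter fun j => j < i := by
      ext x
      simp [hs, and_comm]
    rw [h i hi', hfil]
  rw [hset, h1, Finset.sum_congr rfl h2,
    sum_count_filter (fun c => 2 * (-1 : ℤ) ^ (c + 1)) s, sum_alt_neg]

private lemma f1_diff_altpos {K : ℕ} {a b : Fin K → ℤ} (h : CRW.AltPos K a b) :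
    CRW.f1 K b - CRW.f1 K a =
      if Odd ((Finset.univ.filter fun i : Fin K => b i ≠ a i).card) then 2 else 0 := by
  classical
  have hset : (Finset.univ.filter fun i : Fin K => b i ≠ a i)
      = (Finset.univ.filter fun i : Fin K => b i - a i ≠ 0) := by
    apply Finset.filter_congr
    intro i _
    simp [sub_ne_zero]
  set s := Finset.univ.filter fun i : Fin K => b i - a i ≠ 0 with hs
  have h1 : CRW.f1 K b - CRW.f1 K a = ∑ i ∈ s, (b i - a i) := by
    rw [CRW.f1, CRW.f1, ← Finset.sum_sub_distrib, hs]
    exact (Finset.sum_filter_ne_zero _).symm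
  have h2 : ∀ i ∈ s, b i - a i = 2 * (-1 : ℤ) ^ ((s.filter fun j => j < i).card) := by
    intro i hi
    have hi' : b i - a i ≠ 0 := by
      rw [hs] at hi
      simpa using hi
    have hfil : (Finset.univ.filter fun j : Fin K => j < i ∧ b j - a j ≠ 0)
        = s.filter fun j => j < i := by
      ext x
      simp [hs, and_comm]
    rw [h i hi', hfil]
  rw [hset, h1, Finset.sum_congr rfl h2,
    sum_count_filter (fun c => 2 * (-1 : ℤ) ^ c) s, sum_alt_pos]

end Aux

/-- `(∇·(∇f₁))(a) = -2(α_od(a) - ᾱ_od(a))`. -/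
theorem statement10 (K : ℕ) (hK : 1 ≤ K) (a : Fin K → ℤ) (ha : a ∈ CRW.V K) :
    CRW.divE K (CRW.gradE K fun b => (CRW.f1 K b : ℝ)) a =
      -2 * ((CRW.alphaOd K a : ℝ) - (CRW.abarOd K a : ℝ)) := by
  classical
  -- reindexing lemma: sum over edges leaving a equals sum over endpoints
  have reindex : ∀ (E : Finset ((Fin K → ℤ) × (Fin K → ℤ))), E ⊆ (CRW.V K) ×ˢ (CRW.V K) →
      ∑ p ∈ E.filter (fun p => p.1 = a), ((CRW.f1 K p.2 : ℝ) - (CRW.f1 K p.1 : ℝ))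
        = ∑ b ∈ (CRW.V K).filter (fun b => (a, b) ∈ E),
            ((CRW.f1 K b : ℝ) - (CRW.f1 K a : ℝ)) := by
    intro E hE
    apply Finset.sum_nbij' (i := fun p => p.2) (j := fun b => (a, b))
    · intro p hp
      obtain ⟨hpE, hpa⟩ := Finset.mem_filter.mp hp
      have h2 : p.2 ∈ CRW.V K := (Finset.mem_product.mp (hE hpE)).2
      refine Finset.mem_filter.mpr ⟨h2, ?_⟩
      have : (a, p.2) = p := by
        rw [← hpa]
      rw [this]
      exact hpE
    · intro b hb
      obtain ⟨hbV, hbE⟩ := Finset.mem_filter.mp hb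
      exact Finset.mem_filter.mpr ⟨hbE, rfl⟩
    · intro p hp
      obtain ⟨_, hpa⟩ := Finset.mem_filter.mp hp
      rw [← hpa]
    · intro b _
      rfl
    · intro p hp
      obtain ⟨_, hpa⟩ := Finset.mem_filter.mp hp
      rw [hpa]
  -- counting lemma
  have countOd : ∀ (E : Finset ((Fin K → ℤ) × (Fin K → ℤ))),
      (((CRW.V K).filter fun b => (a, b) ∈ E ∧
          Odd ((Finset.univ.filter fun i : Fin K => b i ≠ a i).card)).card)
        = ∑ k ∈ (Finset.range (K + 1)).filter (fun k => Odd k),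
            (((CRW.V K).filter fun b =>
              (a, b) ∈ E ∧
                (Finset.univ.filter fun i : Fin K => b i ≠ a i).card = k).card) := by
    intro E
    have hmem : ∀ b ∈ (CRW.V K).filter (fun b => (a, b) ∈ E ∧
        Odd ((Finset.univ.filter fun i : Fin K => b i ≠ a i).card)),
        ((Finset.univ.filter fun i : Fin K => b i ≠ a i).card)
          ∈ (Finset.range (K + 1)).filter (fun k => Odd k) := by
      intro b hb
      obtain ⟨hbV, _, hodd⟩ := Finset.mem_filter.mp hb
      refine Finset.mem_filter.mpr ⟨Finset.mem_range.mpr ?_, hodd⟩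
      have := Finset.card_filter_le Finset.univ (fun i : Fin K => b i ≠ a i)
      simp only [Finset.card_univ, Fintype.card_fin] at this
      omega
    rw [Finset.card_eq_sum_card_fiberwise hmem]
    apply Finset.sum_congr rfl
    intro k hk
    have hodd : Odd k := (Finset.mem_filter.mp hk).2
    congr 1
    ext b
    simp only [Finset.filter_filter, Finset.mem_filter]
    constructor
    · rintro ⟨hbV, ⟨hE, _⟩, hD⟩
      exact ⟨hbV, hE, hD⟩
    · rintro ⟨hbV, hE, hD⟩
      exact ⟨hbV, ⟨hE, hD ▸ hodd⟩, hD⟩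
  -- split divergence into positive and negative parts
  have hdisj : Disjoint
      ((((CRW.Eplus K).image fun p => ((true : Bool), p))).filter
        (fun e : CRW.Edge K => e.2.1 = a))
      ((((CRW.Eminus K).image fun p => ((false : Bool), p))).filter
        (fun e : CRW.Edge K => e.2.1 = a)) := by
    rw [Finset.disjoint_left]
    rintro e he1 he2
    obtain ⟨he1, _⟩ := Finset.mem_filter.mp he1
    obtain ⟨he2, _⟩ := Finset.mem_filter.mp he2
    obtain ⟨p, _, rfl⟩ := Finset.mem_image.mp he1
    obtain ⟨q, _, hq⟩ := Finset.mem_image.mp he2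
    simp at hq
  have hsplit : CRW.divE K (CRW.gradE K fun b => (CRW.f1 K b : ℝ)) a
      = (∑ p ∈ (CRW.Eplus K).filter (fun p => p.1 = a),
          ((CRW.f1 K p.2 : ℝ) - (CRW.f1 K p.1 : ℝ)))
        + ∑ p ∈ (CRW.Eminus K).filter (fun p => p.1 = a),
            ((CRW.f1 K p.2 : ℝ) - (CRW.f1 K p.1 : ℝ)) := by
    rw [CRW.divE, CRW.EK, Finset.filter_union, Finset.sum_union hdisj,
      Finset.filter_image, Finset.filter_image, Finset.sum_image, Finset.sum_image]
    · rfl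
    · intro x _ y _ h
      simpa using h
    · intro x _ y _ h
      simpa using h
  -- evaluate the positive part
  have hplus : ∑ p ∈ (CRW.Eplus K).filter (fun p => p.1 = a),
      ((CRW.f1 K p.2 : ℝ) - (CRW.f1 K p.1 : ℝ)) = -2 * (CRW.alphaOd K a : ℝ) := by
    rw [reindex (CRW.Eplus K) (Finset.filter_subset _ _)]
    have h2 : ∀ b ∈ (CRW.V K).filter (fun b => (a, b) ∈ CRW.Eplus K),
        ((CRW.f1 K b : ℝ) - (CRW.f1 K a : ℝ))
          = if Odd ((Finset.univ.filter fun i : Fin K => b i ≠ a i).card)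
              then (-2 : ℝ) else 0 := by
      intro b hb
      have hAlt := altneg_of_mem (Finset.mem_filter.mp hb).2
      have := f1_diff_altneg hAlt
      rw [← Int.cast_sub, this]
      split <;> norm_num
    rw [Finset.sum_congr rfl h2, Finset.sum_ite, Finset.sum_const, Finset.sum_const,
      smul_zero, add_zero, Finset.filter_filter, countOd (CRW.Eplus K)]
    have hrfl : (∑ k ∈ (Finset.range (K + 1)).filter (fun k => Odd k),
        (((CRW.V K).filter fun b =>
          (a, b) ∈ CRW.Eplus K ∧
            (Finset.univ.filter fun i : Fin K => b i ≠ a i).card = k).card))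
        = CRW.alphaOd K a := rfl
    rw [hrfl, nsmul_eq_mul]
    ring
  -- evaluate the negative part
  have hminus : ∑ p ∈ (CRW.Eminus K).filter (fun p => p.1 = a),
      ((CRW.f1 K p.2 : ℝ) - (CRW.f1 K p.1 : ℝ)) = 2 * (CRW.abarOd K a : ℝ) := by
    rw [reindex (CRW.Eminus K) (Finset.filter_subset _ _)]
    have h2 : ∀ b ∈ (CRW.V K).filter (fun b => (a, b) ∈ CRW.Eminus K),
        ((CRW.f1 K b : ℝ) - (CRW.f1 K a : ℝ))
          = if Odd ((Finset.univ.filter fun i : Fin K => b i ≠ a i).card)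
              then (2 : ℝ) else 0 := by
      intro b hb
      have hAlt := altpos_of_mem (Finset.mem_filter.mp hb).2
      have := f1_diff_altpos hAlt
      rw [← Int.cast_sub, this]
      split <;> norm_num
    rw [Finset.sum_congr rfl h2, Finset.sum_ite, Finset.sum_const, Finset.sum_const,
      smul_zero, add_zero, Finset.filter_filter, countOd (CRW.Eminus K)]
    have hrfl : (∑ k ∈ (Finset.range (K + 1)).filter (fun k => Odd k),
        (((CRW.V K).filter fun b =>
          (a, b) ∈ CRW.Eminus K ∧
            (Finset.univ.filter fun i : Fin K => b i ≠ a i).card = k).card))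
        = CRW.abarOd K a := rfl
    rw [hrfl, nsmul_eq_mul]
    ring
  rw [hsplit, hplus, hminus]
  ring
end

section
/- For every a ∈ V_K: φ(a) = ᾱ_ev(a) − (K+1)·α_ev(a) + α_od(a) + ᾱ_od(a), and φ̄(a) = −α_ev(a) + (K+1)·ᾱ_ev(a) − ᾱ_od(a) − α_od(a). -/
open Finset MeasureTheory Filter

namespace CRW

open Finset Fin

variable {K : ℕ}

/-- number of differing coordinates -/
def dc (K : ℕ) (a b : Fin K → ℤ) : ℕ := (Finset.univ.filter fun i : Fin K => b i ≠ a i).card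

lemma filter_sub_ne (a b : Fin K → ℤ) :
    (Finset.univ.filter fun j : Fin K => b j - a j ≠ 0)
      = (Finset.univ.filter fun j : Fin K => b j ≠ a j) := by
  simp [sub_ne_zero]

lemma mem_V {a : Fin K → ℤ} : a ∈ V K ↔ ∀ i, a i = -1 ∨ a i = 1 := by
  simp [V, Fintype.mem_piFinset]

lemma altNeg_refl (a : Fin K → ℤ) : AltNeg K a a := fun _ h => absurd (sub_self _) h

lemma altPos_refl (a : Fin K → ℤ) : AltPos K a a := fun _ h => absurd (sub_self _) h

lemma mem_Eplus {a b : Fin K → ℤ} :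
    (a, b) ∈ Eplus K ↔ a ∈ V K ∧ b ∈ V K ∧ AltNeg K a b := by
  simp only [Eplus, Finset.mem_filter, Finset.mem_product]
  constructor
  · rintro ⟨⟨ha, hb⟩, h | h⟩
    · exact ⟨ha, hb, h ▸ altNeg_refl _⟩
    · exact ⟨ha, hb, h⟩
  · rintro ⟨ha, hb, h⟩
    exact ⟨⟨ha, hb⟩, Or.inr h⟩

lemma mem_Eminus {a b : Fin K → ℤ} :
    (a, b) ∈ Eminus K ↔ a ∈ V K ∧ b ∈ V K ∧ AltPos K a b := by
  simp only [Eminus, Finset.mem_filter, Finset.mem_product]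
  constructor
  · rintro ⟨⟨ha, hb⟩, h | h⟩
    · exact ⟨ha, hb, h ▸ altPos_refl _⟩
    · exact ⟨ha, hb, h⟩
  · rintro ⟨ha, hb, h⟩
    exact ⟨⟨ha, hb⟩, Or.inr h⟩

lemma filter_castSucc_eq (p : Fin (K + 1) → Prop) [DecidablePred p] :
    (Finset.univ.filter fun j : Fin (K + 1) => j ≠ Fin.last K ∧ p j)
      = (Finset.univ.filter fun j : Fin K => p j.castSucc).map
          ⟨Fin.castSucc, Fin.castSucc_injective K⟩ := by
  ext j
  simp only [Finset.mem_filter, Finset.mem_map, Finset.mem_univ, true_and,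
    Function.Embedding.coeFn_mk]
  constructor
  · rintro ⟨hne, hp⟩
    rcases Fin.exists_castSucc_eq.mpr hne with ⟨j', rfl⟩
    exact ⟨j', hp, rfl⟩
  · rintro ⟨j', hp, rfl⟩
    exact ⟨(Fin.castSucc_lt_last j').ne, hp⟩

lemma card_filter_succ_aux (q : Fin (K + 1) → Prop) [DecidablePred q]
    (hq : ∀ j, q j → j ≠ Fin.last K) :
    (Finset.univ.filter q).card
      = (Finset.univ.filter fun j : Fin K => q j.castSucc).card := by
  have h1 : Finset.univ.filter q
      = Finset.univ.filter (fun j : Fin (K+1) => j ≠ Fin.last K ∧ q j) := by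
    apply Finset.filter_congr
    intro j _
    simp only [ne_eq, iff_and_self]  -- q j ↔ (¬ j = last ∧ q j)
    exact fun hj => hq j hj
  rw [h1, filter_castSucc_eq, Finset.card_map]

lemma dc_snoc (a b : Fin K → ℤ) (x y : ℤ) :
    dc (K + 1) (Fin.snoc a x) (Fin.snoc b y) = dc K a b + if y = x then 0 else 1 := by
  rw [dc, dc, Finset.card_filter, Finset.card_filter, Fin.sum_univ_castSucc]
  simp only [Fin.snoc_castSucc, Fin.snoc_last]
  congr 1
  by_cases h : y = x
  · simp [h]
  · simp [h]

lemma dc_le (a b : Fin K → ℤ) : dc K a b ≤ K := by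
  refine le_trans (Finset.card_filter_le _ _) ?_
  simp

lemma dc_eq_zero_iff {a b : Fin K → ℤ} : dc K a b = 0 ↔ b = a := by
  rw [dc, Finset.card_eq_zero, Finset.filter_eq_empty_iff]
  constructor
  · intro h; funext i
    have := h (Finset.mem_univ i)
    simpa using this
  · rintro rfl i _; simp

lemma snoc_mem_V {a : Fin K → ℤ} {x : ℤ} :
    Fin.snoc a x ∈ V (K + 1) ↔ a ∈ V K ∧ (x = -1 ∨ x = 1) := by
  simp only [mem_V]
  constructor
  · intro h
    refine ⟨fun i => ?_, ?_⟩
    · have := h i.castSucc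
      simpa [Fin.snoc_castSucc] using this
    · have := h (Fin.last K)
      simpa [Fin.snoc_last] using this
  · rintro ⟨h, hx⟩ i
    induction i using Fin.lastCases with
    | last => simpa [Fin.snoc_last] using hx
    | cast i => simpa [Fin.snoc_castSucc] using h i

lemma altNeg_snoc {a b : Fin K → ℤ} {x y : ℤ} :
    AltNeg (K + 1) (Fin.snoc a x) (Fin.snoc b y) ↔
      AltNeg K a b ∧ (y - x ≠ 0 → y - x = 2 * (-1 : ℤ) ^ (dc K a b + 1)) := by
  have hcast : ∀ i : Fin K,
      ((Finset.univ.filter fun j : Fin (K+1) =>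
          j < i.castSucc ∧ (Fin.snoc b y : Fin (K+1) → ℤ) j - (Fin.snoc a x : Fin (K+1) → ℤ) j ≠ 0).card)
        = (Finset.univ.filter fun j : Fin K => j < i ∧ b j - a j ≠ 0).card := by
    intro i
    rw [card_filter_succ_aux (fun j => j < i.castSucc ∧ (Fin.snoc b y : Fin (K+1) → ℤ) j - (Fin.snoc a x : Fin (K+1) → ℤ) j ≠ 0)
      (fun j hj => (hj.1.trans_le (Fin.le_last _)).ne)]
    simp only [Fin.snoc_castSucc, Fin.castSucc_lt_castSucc_iff]
  have hlast :
      ((Finset.univ.filter fun j : Fin (K+1) =>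
          j < Fin.last K ∧ (Fin.snoc b y : Fin (K+1) → ℤ) j - (Fin.snoc a x : Fin (K+1) → ℤ) j ≠ 0).card) = dc K a b := by
    rw [card_filter_succ_aux (fun j => j < Fin.last K ∧ (Fin.snoc b y : Fin (K+1) → ℤ) j - (Fin.snoc a x : Fin (K+1) → ℤ) j ≠ 0)
      (fun j hj => hj.1.ne)]
    simp only [Fin.snoc_castSucc, Fin.castSucc_lt_last, true_and]
    rw [filter_sub_ne]
    rfl
  constructor
  · intro h
    refine ⟨fun i hi => ?_, fun hy => ?_⟩
    · have := h i.castSucc (by simpa [Fin.snoc_castSucc] using hi)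
      simp only [Fin.snoc_castSucc] at this
      rwa [hcast i] at this
    · have := h (Fin.last K) (by simpa [Fin.snoc_last] using hy)
      simp only [Fin.snoc_last] at this
      rwa [hlast] at this
  · rintro ⟨h, hl⟩ i hi
    induction i using Fin.lastCases with
    | last =>
      simp only [Fin.snoc_last] at hi ⊢
      rw [hlast]
      exact hl hi
    | cast i =>
      simp only [Fin.snoc_castSucc] at hi ⊢
      rw [hcast i]
      exact h i hi

lemma altPos_snoc {a b : Fin K → ℤ} {x y : ℤ} :
    AltPos (K + 1) (Fin.snoc a x) (Fin.snoc b y) ↔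
      AltPos K a b ∧ (y - x ≠ 0 → y - x = 2 * (-1 : ℤ) ^ (dc K a b)) := by
  have hcast : ∀ i : Fin K,
      ((Finset.univ.filter fun j : Fin (K+1) =>
          j < i.castSucc ∧ (Fin.snoc b y : Fin (K+1) → ℤ) j - (Fin.snoc a x : Fin (K+1) → ℤ) j ≠ 0).card)
        = (Finset.univ.filter fun j : Fin K => j < i ∧ b j - a j ≠ 0).card := by
    intro i
    rw [card_filter_succ_aux (fun j => j < i.castSucc ∧ (Fin.snoc b y : Fin (K+1) → ℤ) j - (Fin.snoc a x : Fin (K+1) → ℤ) j ≠ 0)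
      (fun j hj => (hj.1.trans_le (Fin.le_last _)).ne)]
    simp only [Fin.snoc_castSucc, Fin.castSucc_lt_castSucc_iff]
  have hlast :
      ((Finset.univ.filter fun j : Fin (K+1) =>
          j < Fin.last K ∧ (Fin.snoc b y : Fin (K+1) → ℤ) j - (Fin.snoc a x : Fin (K+1) → ℤ) j ≠ 0).card) = dc K a b := by
    rw [card_filter_succ_aux (fun j => j < Fin.last K ∧ (Fin.snoc b y : Fin (K+1) → ℤ) j - (Fin.snoc a x : Fin (K+1) → ℤ) j ≠ 0)
      (fun j hj => hj.1.ne)]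
    simp only [Fin.snoc_castSucc, Fin.castSucc_lt_last, true_and]
    rw [filter_sub_ne]
    rfl
  constructor
  · intro h
    refine ⟨fun i hi => ?_, fun hy => ?_⟩
    · have := h i.castSucc (by simpa [Fin.snoc_castSucc] using hi)
      simp only [Fin.snoc_castSucc] at this
      rwa [hcast i] at this
    · have := h (Fin.last K) (by simpa [Fin.snoc_last] using hy)
      simp only [Fin.snoc_last] at this
      rwa [hlast] at this
  · rintro ⟨h, hl⟩ i hi
    induction i using Fin.lastCases with
    | last =>
      simp only [Fin.snoc_last] at hi ⊢
      rw [hlast]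
      exact hl hi
    | cast i =>
      simp only [Fin.snoc_castSucc] at hi ⊢
      rw [hcast i]
      exact h i hi

lemma sum_V_snoc {M : Type*} [AddCommMonoid M] (f : (Fin (K + 1) → ℤ) → M) :
    ∑ b ∈ V (K + 1), f b = ∑ b ∈ V K, (f (Fin.snoc b (-1)) + f (Fin.snoc b 1)) := by
  have h2 : ∀ b ∈ V K, f (Fin.snoc b (-1)) + f (Fin.snoc b 1)
      = ∑ y ∈ ({-1, 1} : Finset ℤ), f (Fin.snoc b y) := by
    intro b _
    rw [Finset.sum_pair (by norm_num)]
  rw [Finset.sum_congr rfl h2, ← Finset.sum_product']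
  apply Finset.sum_nbij' (i := fun b => (Fin.init b, b (Fin.last K)))
    (j := fun p => Fin.snoc p.1 p.2)
  · intro b hb
    rw [Finset.mem_product]
    rw [mem_V] at hb
    constructor
    · rw [mem_V]
      intro i
      simpa [Fin.init] using hb i.castSucc
    · simpa using hb (Fin.last K)
  · intro p hp
    rw [Finset.mem_product] at hp
    rcases hp with ⟨h1, h2⟩
    apply snoc_mem_V.mpr
    refine ⟨h1, ?_⟩
    simpa using h2
  · intro b _
    exact Fin.snoc_init_self b
  · intro p _
    ext
    · simp [Fin.init_snoc]
    · simp [Fin.snoc_last]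
  · intro b _
    rw [Fin.snoc_init_self]

def SP (K k : ℕ) (a : Fin K → ℤ) (F : (Fin K → ℤ) → ℤ) : ℤ :=
  ∑ b ∈ V K, if (a, b) ∈ Eplus K ∧ dc K a b = k then F b else 0

def SM (K k : ℕ) (a : Fin K → ℤ) (F : (Fin K → ℤ) → ℤ) : ℤ :=
  ∑ b ∈ V K, if (a, b) ∈ Eminus K ∧ dc K a b = k then F b else 0

variable {a b : Fin K → ℤ} {x : ℤ} {k : ℕ}

lemma alphaK_cast (K k : ℕ) (a : Fin K → ℤ) :
    (alphaK K k a : ℤ) = SP K k a (fun _ => 1) := by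
  rw [alphaK, Finset.card_filter, SP]
  push_cast
  rfl

lemma abarK_cast (K k : ℕ) (a : Fin K → ℤ) :
    (abarK K k a : ℤ) = SM K k a (fun _ => 1) := by
  rw [abarK, Finset.card_filter, SM]
  push_cast
  rfl

lemma SP_congr {F G : (Fin K → ℤ) → ℤ}
    (h : ∀ b ∈ V K, (a, b) ∈ Eplus K → dc K a b = k → F b = G b) :
    SP K k a F = SP K k a G := by
  apply Finset.sum_congr rfl
  intro b hb
  by_cases hc : (a, b) ∈ Eplus K ∧ dc K a b = k
  · rw [if_pos hc, if_pos hc, h b hb hc.1 hc.2]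
  · rw [if_neg hc, if_neg hc]

lemma SM_congr {F G : (Fin K → ℤ) → ℤ}
    (h : ∀ b ∈ V K, (a, b) ∈ Eminus K → dc K a b = k → F b = G b) :
    SM K k a F = SM K k a G := by
  apply Finset.sum_congr rfl
  intro b hb
  by_cases hc : (a, b) ∈ Eminus K ∧ dc K a b = k
  · rw [if_pos hc, if_pos hc, h b hb hc.1 hc.2]
  · rw [if_neg hc, if_neg hc]

lemma SP_add (F G : (Fin K → ℤ) → ℤ) :
    SP K k a (fun b => F b + G b) = SP K k a F + SP K k a G := by
  rw [SP, SP, SP, ← Finset.sum_add_distrib]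
  exact Finset.sum_congr rfl fun b _ => by split <;> simp

lemma SM_add (F G : (Fin K → ℤ) → ℤ) :
    SM K k a (fun b => F b + G b) = SM K k a F + SM K k a G := by
  rw [SM, SM, SM, ← Finset.sum_add_distrib]
  exact Finset.sum_congr rfl fun b _ => by split <;> simp

lemma SP_const (c : ℤ) : SP K k a (fun _ => c) = c * (alphaK K k a : ℤ) := by
  rw [alphaK_cast, SP, SP, Finset.mul_sum]
  exact Finset.sum_congr rfl fun b _ => by split <;> simp

lemma SM_const (c : ℤ) : SM K k a (fun _ => c) = c * (abarK K k a : ℤ) := by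
  rw [abarK_cast, SM, SM, Finset.mul_sum]
  exact Finset.sum_congr rfl fun b _ => by split <;> simp

lemma SP_zero (ha : a ∈ V K) (F : (Fin K → ℤ) → ℤ) : SP K 0 a F = F a := by
  rw [SP]
  rw [Finset.sum_eq_single_of_mem a ha (fun c _ hne => by
    rw [if_neg]
    rintro ⟨-, h0⟩
    exact hne (dc_eq_zero_iff.mp h0))]
  rw [if_pos ⟨mem_Eplus.mpr ⟨ha, ha, altNeg_refl a⟩, dc_eq_zero_iff.mpr rfl⟩]

lemma SM_zero (ha : a ∈ V K) (F : (Fin K → ℤ) → ℤ) : SM K 0 a F = F a := by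
  rw [SM]
  rw [Finset.sum_eq_single_of_mem a ha (fun c _ hne => by
    rw [if_neg]
    rintro ⟨-, h0⟩
    exact hne (dc_eq_zero_iff.mp h0))]
  rw [if_pos ⟨mem_Eminus.mpr ⟨ha, ha, altPos_refl a⟩, dc_eq_zero_iff.mpr rfl⟩]

lemma SP_top (h : K < k) (F : (Fin K → ℤ) → ℤ) : SP K k a F = 0 :=
  Finset.sum_eq_zero fun b _ => by
    rw [if_neg]
    rintro ⟨-, hk⟩
    have := dc_le a b
    omega

lemma SM_top (h : K < k) (F : (Fin K → ℤ) → ℤ) : SM K k a F = 0 :=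
  Finset.sum_eq_zero fun b _ => by
    rw [if_neg]
    rintro ⟨-, hk⟩
    have := dc_le a b
    omega

lemma flip_sign_iff_neg (x : ℤ) (d : ℕ) :
    (-x) - x = 2 * (-1 : ℤ) ^ (d + 1) ↔ x = (-1 : ℤ) ^ d := by
  have h1 : (-x) - x = -(2 * x) := by ring
  have h2 : 2 * (-1 : ℤ) ^ (d + 1) = -(2 * (-1 : ℤ) ^ d) := by
    rw [pow_succ]; ring
  rw [h1, h2, neg_inj]
  exact ⟨fun h => mul_left_cancel₀ two_ne_zero h, fun h => by rw [h]⟩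

lemma flip_sign_iff_pos (x : ℤ) (d : ℕ) :
    (-x) - x = 2 * (-1 : ℤ) ^ d ↔ x = (-1 : ℤ) ^ (d + 1) := by
  have h1 : (-x) - x = -(2 * x) := by ring
  have h2 : 2 * (-1 : ℤ) ^ d = -(2 * (-1 : ℤ) ^ (d + 1)) := by
    rw [pow_succ]; ring
  rw [h1, h2, neg_inj]
  exact ⟨fun h => mul_left_cancel₀ two_ne_zero h, fun h => by rw [h]⟩

lemma neg_ne_self (hx : x = -1 ∨ x = 1) : -x ≠ x := by
  rcases hx with rfl | rfl <;> norm_num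

lemma neg_mem_pm (hx : x = -1 ∨ x = 1) : -x = -1 ∨ -x = 1 := by
  rcases hx with rfl | rfl <;> norm_num

lemma sub_flip_ne (hx : x = -1 ∨ x = 1) : (-x) - x ≠ 0 := by
  rcases hx with rfl | rfl <;> norm_num

lemma cond_snoc_same (ha : a ∈ V K) (hb : b ∈ V K) (hx : x = -1 ∨ x = 1) (k : ℕ) :
    (((Fin.snoc a x, Fin.snoc b x) ∈ Eplus (K+1))
        ∧ dc (K+1) (Fin.snoc a x) (Fin.snoc b x) = k)
      ↔ ((a, b) ∈ Eplus K ∧ dc K a b = k) := by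
  rw [mem_Eplus, mem_Eplus, snoc_mem_V, snoc_mem_V, altNeg_snoc, dc_snoc]
  constructor
  · rintro ⟨⟨-, ⟨hbV, -⟩, hAlt, -⟩, hd⟩
    refine ⟨⟨ha, hbV, hAlt⟩, ?_⟩
    simpa using hd
  · rintro ⟨⟨-, hbV, hAlt⟩, hd⟩
    refine ⟨⟨⟨ha, hx⟩, ⟨hbV, hx⟩, hAlt, fun hcon => absurd (sub_self x) hcon⟩, ?_⟩
    simpa using hd

lemma cond_snoc_same' (ha : a ∈ V K) (hb : b ∈ V K) (hx : x = -1 ∨ x = 1) (k : ℕ) :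
    (((Fin.snoc a x, Fin.snoc b x) ∈ Eminus (K+1))
        ∧ dc (K+1) (Fin.snoc a x) (Fin.snoc b x) = k)
      ↔ ((a, b) ∈ Eminus K ∧ dc K a b = k) := by
  rw [mem_Eminus, mem_Eminus, snoc_mem_V, snoc_mem_V, altPos_snoc, dc_snoc]
  constructor
  · rintro ⟨⟨-, ⟨hbV, -⟩, hAlt, -⟩, hd⟩
    refine ⟨⟨ha, hbV, hAlt⟩, ?_⟩
    simpa using hd
  · rintro ⟨⟨-, hbV, hAlt⟩, hd⟩
    refine ⟨⟨⟨ha, hx⟩, ⟨hbV, hx⟩, hAlt, fun hcon => absurd (sub_self x) hcon⟩, ?_⟩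
    simpa using hd

lemma cond_snoc_flip (ha : a ∈ V K) (hx : x = -1 ∨ x = 1) (k : ℕ) :
    (((Fin.snoc a x, Fin.snoc b (-x)) ∈ Eplus (K+1))
        ∧ dc (K+1) (Fin.snoc a x) (Fin.snoc b (-x)) = k + 1)
      ↔ (x = (-1:ℤ) ^ k ∧ ((a, b) ∈ Eplus K ∧ dc K a b = k)) := by
  rw [mem_Eplus, mem_Eplus, snoc_mem_V, snoc_mem_V, altNeg_snoc, dc_snoc,
    if_neg (neg_ne_self hx)]
  constructor
  · rintro ⟨⟨-, ⟨hbV, -⟩, hAlt, hsign⟩, hd⟩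
    have hdc : dc K a b = k := by omega
    have hs := hsign (sub_flip_ne hx)
    rw [hdc] at hs
    exact ⟨(flip_sign_iff_neg x k).mp hs, ⟨⟨ha, hbV, hAlt⟩, hdc⟩⟩
  · rintro ⟨hxk, hE, hdc⟩
    rcases hE with ⟨-, hbV, hAlt⟩
    refine ⟨⟨⟨ha, hx⟩, ⟨hbV, neg_mem_pm hx⟩, hAlt, fun _ => ?_⟩, by omega⟩
    rw [hdc]
    exact (flip_sign_iff_neg x k).mpr hxk

lemma cond_snoc_flip' (ha : a ∈ V K) (hx : x = -1 ∨ x = 1) (k : ℕ) :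
    (((Fin.snoc a x, Fin.snoc b (-x)) ∈ Eminus (K+1))
        ∧ dc (K+1) (Fin.snoc a x) (Fin.snoc b (-x)) = k + 1)
      ↔ (x = (-1:ℤ) ^ (k + 1) ∧ ((a, b) ∈ Eminus K ∧ dc K a b = k)) := by
  rw [mem_Eminus, mem_Eminus, snoc_mem_V, snoc_mem_V, altPos_snoc, dc_snoc,
    if_neg (neg_ne_self hx)]
  constructor
  · rintro ⟨⟨-, ⟨hbV, -⟩, hAlt, hsign⟩, hd⟩
    have hdc : dc K a b = k := by omega
    have hs := hsign (sub_flip_ne hx)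
    rw [hdc] at hs
    exact ⟨(flip_sign_iff_pos x k).mp hs, ⟨⟨ha, hbV, hAlt⟩, hdc⟩⟩
  · rintro ⟨hxk, hE, hdc⟩
    rcases hE with ⟨-, hbV, hAlt⟩
    refine ⟨⟨⟨ha, hx⟩, ⟨hbV, neg_mem_pm hx⟩, hAlt, fun _ => ?_⟩, by omega⟩
    rw [hdc]
    exact (flip_sign_iff_pos x k).mpr hxk

lemma SP_succ_snoc (ha : a ∈ V K) (hx : x = -1 ∨ x = 1)
    (F : (Fin (K + 1) → ℤ) → ℤ) (k : ℕ) :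
    SP (K + 1) (k + 1) (Fin.snoc a x) F
      = SP K (k + 1) a (fun b => F (Fin.snoc b x))
        + if x = (-1 : ℤ) ^ k then SP K k a (fun b => F (Fin.snoc b (-x))) else 0 := by
  simp only [SP]
  rw [sum_V_snoc fun c => if ((Fin.snoc a x, c) ∈ Eplus (K+1)
      ∧ dc (K+1) (Fin.snoc a x) c = k + 1) then F c else 0]
  have hifsum : (if x = (-1:ℤ)^k then
        (∑ b ∈ V K, if (a, b) ∈ Eplus K ∧ dc K a b = k then F (Fin.snoc b (-x)) else 0) else 0)
      = ∑ b ∈ V K, (if x = (-1:ℤ)^k then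
          (if (a, b) ∈ Eplus K ∧ dc K a b = k then F (Fin.snoc b (-x)) else 0) else 0) := by
    split
    · rfl
    · rw [Finset.sum_const_zero]
  rw [hifsum, ← Finset.sum_add_distrib]
  apply Finset.sum_congr rfl
  intro b hb
  have hsame : (if ((Fin.snoc a x, Fin.snoc b x) ∈ Eplus (K+1)
        ∧ dc (K+1) (Fin.snoc a x) (Fin.snoc b x) = k + 1) then F (Fin.snoc b x) else 0)
      = (if (a, b) ∈ Eplus K ∧ dc K a b = k + 1 then F (Fin.snoc b x) else 0) := by
    simp only [cond_snoc_same ha hb hx (k+1)]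
  have hflip : (if ((Fin.snoc a x, Fin.snoc b (-x)) ∈ Eplus (K+1)
        ∧ dc (K+1) (Fin.snoc a x) (Fin.snoc b (-x)) = k + 1) then F (Fin.snoc b (-x)) else 0)
      = (if x = (-1:ℤ)^k then
          (if (a, b) ∈ Eplus K ∧ dc K a b = k then F (Fin.snoc b (-x)) else 0) else 0) := by
    simp only [cond_snoc_flip (b := b) ha hx k]
    by_cases h1 : x = (-1:ℤ)^k
    · simp [h1]
    · simp [h1]
  rcases hx with rfl | rfl
  · have hneg : (-(-1) : ℤ) = 1 := by norm_num
    rw [hneg] at hflip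
    rw [hneg, ← hsame, ← hflip]
  · rw [← hsame, ← hflip]
    exact add_comm _ _

lemma SM_succ_snoc (ha : a ∈ V K) (hx : x = -1 ∨ x = 1)
    (F : (Fin (K + 1) → ℤ) → ℤ) (k : ℕ) :
    SM (K + 1) (k + 1) (Fin.snoc a x) F
      = SM K (k + 1) a (fun b => F (Fin.snoc b x))
        + if x = (-1 : ℤ) ^ (k + 1) then SM K k a (fun b => F (Fin.snoc b (-x))) else 0 := by
  simp only [SM]
  rw [sum_V_snoc fun c => if ((Fin.snoc a x, c) ∈ Eminus (K+1)
      ∧ dc (K+1) (Fin.snoc a x) c = k + 1) then F c else 0]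
  have hifsum : (if x = (-1:ℤ)^(k+1) then
        (∑ b ∈ V K, if (a, b) ∈ Eminus K ∧ dc K a b = k then F (Fin.snoc b (-x)) else 0) else 0)
      = ∑ b ∈ V K, (if x = (-1:ℤ)^(k+1) then
          (if (a, b) ∈ Eminus K ∧ dc K a b = k then F (Fin.snoc b (-x)) else 0) else 0) := by
    split
    · rfl
    · rw [Finset.sum_const_zero]
  rw [hifsum, ← Finset.sum_add_distrib]
  apply Finset.sum_congr rfl
  intro b hb
  have hsame : (if ((Fin.snoc a x, Fin.snoc b x) ∈ Eminus (K+1)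
        ∧ dc (K+1) (Fin.snoc a x) (Fin.snoc b x) = k + 1) then F (Fin.snoc b x) else 0)
      = (if (a, b) ∈ Eminus K ∧ dc K a b = k + 1 then F (Fin.snoc b x) else 0) := by
    simp only [cond_snoc_same' ha hb hx (k+1)]
  have hflip : (if ((Fin.snoc a x, Fin.snoc b (-x)) ∈ Eminus (K+1)
        ∧ dc (K+1) (Fin.snoc a x) (Fin.snoc b (-x)) = k + 1) then F (Fin.snoc b (-x)) else 0)
      = (if x = (-1:ℤ)^(k+1) then
          (if (a, b) ∈ Eminus K ∧ dc K a b = k then F (Fin.snoc b (-x)) else 0) else 0) := by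
    simp only [cond_snoc_flip' (b := b) ha hx k]
    by_cases h1 : x = (-1:ℤ)^(k+1)
    · simp [h1]
    · simp [h1]
  rcases hx with rfl | rfl
  · have hneg : (-(-1) : ℤ) = 1 := by norm_num
    rw [hneg] at hflip
    rw [hneg, ← hsame, ← hflip]
  · rw [← hsame, ← hflip]
    exact add_comm _ _

lemma alphaK_succ_snoc (ha : a ∈ V K) (hx : x = -1 ∨ x = 1) (k : ℕ) :
    (alphaK (K+1) (k+1) (Fin.snoc a x) : ℤ)
      = (alphaK K (k+1) a : ℤ) + if x = (-1:ℤ)^k then (alphaK K k a : ℤ) else 0 := by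
  rw [alphaK_cast, alphaK_cast, alphaK_cast]
  exact SP_succ_snoc ha hx (fun _ => (1:ℤ)) k

lemma abarK_succ_snoc (ha : a ∈ V K) (hx : x = -1 ∨ x = 1) (k : ℕ) :
    (abarK (K+1) (k+1) (Fin.snoc a x) : ℤ)
      = (abarK K (k+1) a : ℤ) + if x = (-1:ℤ)^(k+1) then (abarK K k a : ℤ) else 0 := by
  rw [abarK_cast, abarK_cast, abarK_cast]
  exact SM_succ_snoc ha hx (fun _ => (1:ℤ)) k

lemma alphaK_zero (ha : a ∈ V K) : (alphaK K 0 a : ℤ) = 1 := by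
  rw [alphaK_cast, SP_zero ha]

lemma abarK_zero (ha : a ∈ V K) : (abarK K 0 a : ℤ) = 1 := by
  rw [abarK_cast, SM_zero ha]

lemma alphaK_top (h : K < k) : (alphaK K k a : ℤ) = 0 := by
  rw [alphaK_cast]; exact SP_top h _

lemma abarK_top (h : K < k) : (abarK K k a : ℤ) = 0 := by
  rw [abarK_cast]; exact SM_top h _

lemma exists_snoc {a : Fin (K+1) → ℤ} (ha : a ∈ V (K+1)) :
    ∃ a' x, a = Fin.snoc a' x ∧ a' ∈ V K ∧ (x = -1 ∨ x = 1) := by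
  refine ⟨Fin.init a, a (Fin.last K), (Fin.snoc_init_self a).symm, ?_, ?_⟩
  · rw [mem_V] at ha ⊢
    intro i
    simpa [Fin.init] using ha i.castSucc
  · simpa using (mem_V.mp ha) (Fin.last K)

lemma alpha1_snoc (ha : a ∈ V K) (hx : x = -1 ∨ x = 1) :
    (alphaK (K+1) 1 (Fin.snoc a x) : ℤ)
      = (alphaK K 1 a : ℤ) + if x = 1 then 1 else 0 := by
  have h := alphaK_succ_snoc ha hx 0
  rw [pow_zero] at h
  rw [h, alphaK_zero ha]

lemma abar1_snoc (ha : a ∈ V K) (hx : x = -1 ∨ x = 1) :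
    (abarK (K+1) 1 (Fin.snoc a x) : ℤ)
      = (abarK K 1 a : ℤ) + if x = -1 then 1 else 0 := by
  have h := abarK_succ_snoc ha hx 0
  norm_num at h
  rw [h, abarK_zero ha]

lemma alpha1_add_abar1 : ∀ {K : ℕ} {a : Fin K → ℤ}, a ∈ V K →
    (alphaK K 1 a : ℤ) + (abarK K 1 a : ℤ) = K := by
  intro K
  induction K with
  | zero =>
    intro a _
    rw [alphaK_top (by norm_num), abarK_top (by norm_num)]
    norm_num
  | succ K ih =>
    intro a ha
    obtain ⟨a', x, rfl, ha', hx⟩ := exists_snoc ha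
    have h := ih ha'
    rw [alpha1_snoc ha' hx, abar1_snoc ha' hx]
    push_cast
    rcases hx with rfl | rfl <;> norm_num <;> linarith

lemma edgeP_alpha1 : ∀ {K : ℕ} {a b : Fin K → ℤ}, (a, b) ∈ Eplus K →
    ((alphaK K 1 b : ℤ) = (alphaK K 1 a : ℤ) - (if Odd (dc K a b) then 1 else 0)
      ∧ (abarK K 1 b : ℤ) = (abarK K 1 a : ℤ) + (if Odd (dc K a b) then 1 else 0)) := by
  intro K
  induction K with
  | zero =>
    intro a b _
    have hba : b = a := funext fun i => i.elim0
    subst hba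
    rw [dc_eq_zero_iff.mpr rfl]
    norm_num
  | succ K ih =>
    intro a b h
    rcases mem_Eplus.mp h with ⟨haV, hbV, hAlt⟩
    obtain ⟨a', x, rfl, ha', hx⟩ := exists_snoc haV
    obtain ⟨b', y, rfl, hb', hy⟩ := exists_snoc hbV
    rw [altNeg_snoc] at hAlt
    rcases hAlt with ⟨hAlt', hsign⟩
    have hE' : (a', b') ∈ Eplus K := mem_Eplus.mpr ⟨ha', hb', hAlt'⟩
    rcases ih hE' with ⟨ih1, ih2⟩
    by_cases hyx : y = x
    · subst hyx
      rw [dc_snoc, if_pos rfl, add_zero,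
        alpha1_snoc ha' hx, alpha1_snoc hb' hx, abar1_snoc ha' hx, abar1_snoc hb' hx]
      constructor <;> linarith
    · have hyx' : y = -x := by
        rcases hx with rfl | rfl <;> rcases hy with rfl | rfl <;> simp_all
      subst hyx'
      have hs := hsign (sub_flip_ne hx)
      have hxd : x = (-1:ℤ)^(dc K a' b') := (flip_sign_iff_neg x (dc K a' b')).mp hs
      rw [dc_snoc, if_neg (neg_ne_self hx),
        alpha1_snoc ha' hx, alpha1_snoc hb' (neg_mem_pm hx),
        abar1_snoc ha' hx, abar1_snoc hb' (neg_mem_pm hx)]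
      rcases hx with rfl | rfl
      · have hd : Odd (dc K a' b') := by
          rcases Nat.even_or_odd (dc K a' b') with he | ho
          · rw [he.neg_one_pow] at hxd; norm_num at hxd
          · exact ho
        have hd1 : ¬ Odd (dc K a' b' + 1) := by
          rw [Nat.odd_add_one]
          exact not_not_intro hd
        rw [if_pos hd] at ih1 ih2
        rw [if_neg hd1]
        norm_num
        constructor <;> linarith
      · have hd : ¬ Odd (dc K a' b') := by
          intro ho
          rw [ho.neg_one_pow] at hxd
          norm_num at hxd
        have hd1 : Odd (dc K a' b' + 1) := by
          rw [Nat.odd_add_one]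
          exact hd
        rw [if_neg hd] at ih1 ih2
        rw [if_pos hd1]
        norm_num
        constructor <;> linarith

lemma edgeM_alpha1 : ∀ {K : ℕ} {a b : Fin K → ℤ}, (a, b) ∈ Eminus K →
    ((alphaK K 1 b : ℤ) = (alphaK K 1 a : ℤ) + (if Odd (dc K a b) then 1 else 0)
      ∧ (abarK K 1 b : ℤ) = (abarK K 1 a : ℤ) - (if Odd (dc K a b) then 1 else 0)) := by
  intro K
  induction K with
  | zero =>
    intro a b _
    have hba : b = a := funext fun i => i.elim0
    subst hba
    rw [dc_eq_zero_iff.mpr rfl]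
    norm_num
  | succ K ih =>
    intro a b h
    rcases mem_Eminus.mp h with ⟨haV, hbV, hAlt⟩
    obtain ⟨a', x, rfl, ha', hx⟩ := exists_snoc haV
    obtain ⟨b', y, rfl, hb', hy⟩ := exists_snoc hbV
    rw [altPos_snoc] at hAlt
    rcases hAlt with ⟨hAlt', hsign⟩
    have hE' : (a', b') ∈ Eminus K := mem_Eminus.mpr ⟨ha', hb', hAlt'⟩
    rcases ih hE' with ⟨ih1, ih2⟩
    by_cases hyx : y = x
    · subst hyx
      rw [dc_snoc, if_pos rfl, add_zero,
        alpha1_snoc ha' hx, alpha1_snoc hb' hx, abar1_snoc ha' hx, abar1_snoc hb' hx]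
      constructor <;> linarith
    · have hyx' : y = -x := by
        rcases hx with rfl | rfl <;> rcases hy with rfl | rfl <;> simp_all
      subst hyx'
      have hs := hsign (sub_flip_ne hx)
      have hxd : x = (-1:ℤ)^(dc K a' b' + 1) :=
        (flip_sign_iff_pos x (dc K a' b')).mp hs
      rw [dc_snoc, if_neg (neg_ne_self hx),
        alpha1_snoc ha' hx, alpha1_snoc hb' (neg_mem_pm hx),
        abar1_snoc ha' hx, abar1_snoc hb' (neg_mem_pm hx)]
      rcases hx with rfl | rfl
      · have hd1 : Odd (dc K a' b' + 1) := by
          rcases Nat.even_or_odd (dc K a' b' + 1) with he | ho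
          · rw [he.neg_one_pow] at hxd; norm_num at hxd
          · exact ho
        have hd : ¬ Odd (dc K a' b') := by
          rw [Nat.odd_add_one] at hd1
          exact hd1
        rw [if_neg hd] at ih1 ih2
        rw [if_pos hd1]
        norm_num
        constructor <;> linarith
      · have hd1 : ¬ Odd (dc K a' b' + 1) := by
          intro ho
          rw [ho.neg_one_pow] at hxd
          norm_num at hxd
        have hd : Odd (dc K a' b') := by
          rw [Nat.odd_add_one] at hd1
          exact not_not.mp hd1
        rw [if_pos hd] at ih1 ih2
        rw [if_neg hd1]
        norm_num
        constructor <;> linarith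

lemma f2_snoc (ha : a ∈ V K) (hx : x = -1 ∨ x = 1) :
    f2 (K+1) (Fin.snoc a x) = f2 K a
      + (if x = 1 then -(abarK K 1 a : ℤ) else (alphaK K 1 a : ℤ)) := by
  have h1 := alphaK_succ_snoc ha hx 1
  have h2 := abarK_succ_snoc ha hx 1
  norm_num at h1 h2
  rw [f2, f2, h1, h2]
  rcases hx with rfl | rfl <;> norm_num <;> ring

def PhiP (K k : ℕ) (a : Fin K → ℤ) : ℤ := SP K k a (fun b => f2 K b - f2 K a)

def PhiM (K k : ℕ) (a : Fin K → ℤ) : ℤ := SM K k a (fun b => f2 K b - f2 K a)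

lemma PhiP_zero (ha : a ∈ V K) : PhiP K 0 a = 0 := by rw [PhiP, SP_zero ha, sub_self]

lemma PhiM_zero (ha : a ∈ V K) : PhiM K 0 a = 0 := by rw [PhiM, SM_zero ha, sub_self]

lemma PhiP_top (h : K < k) : PhiP K k a = 0 := SP_top h _

lemma PhiM_top (h : K < k) : PhiM K k a = 0 := SM_top h _

lemma PhiP_succ_snoc (ha : a ∈ V K) (hx : x = -1 ∨ x = 1) (k : ℕ) :
    PhiP (K+1) (k+1) (Fin.snoc a x)
      = (PhiP K (k+1) a - (if Odd (k+1) then 1 else 0) * (alphaK K (k+1) a : ℤ))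
        + if x = (-1:ℤ)^k then
            (PhiP K k a + (if x = 1 then (K:ℤ) else -((K:ℤ)+1)) * (alphaK K k a : ℤ))
          else 0 := by
  rw [PhiP]
  rw [SP_succ_snoc ha hx (fun c => f2 (K+1) c - f2 (K+1) (Fin.snoc a x)) k]
  congr 1
  · have heq : SP K (k+1) a (fun b => f2 (K+1) (Fin.snoc b x) - f2 (K+1) (Fin.snoc a x))
        = SP K (k+1) a (fun b => (f2 K b - f2 K a) + (-(if Odd (k+1) then 1 else 0))) := by
      apply SP_congr
      intro b _ hE hdc
      have hbV : b ∈ V K := (mem_Eplus.mp hE).2.1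
      rcases edgeP_alpha1 hE with ⟨h1, h2⟩
      rw [hdc] at h1 h2
      rw [f2_snoc hbV hx, f2_snoc ha hx]
      rcases hx with rfl | rfl
      · norm_num
        linarith
      · norm_num
        linarith
    rw [heq, SP_add, SP_const]
    rw [PhiP]
    ring
  · by_cases hxk : x = (-1:ℤ)^k
    · rw [if_pos hxk, if_pos hxk]
      have heq : SP K k a (fun b => f2 (K+1) (Fin.snoc b (-x)) - f2 (K+1) (Fin.snoc a x))
          = SP K k a (fun b => (f2 K b - f2 K a)
              + (if x = 1 then (K:ℤ) else -((K:ℤ)+1))) := by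
        apply SP_congr
        intro b _ hE hdc
        have hbV : b ∈ V K := (mem_Eplus.mp hE).2.1
        rcases edgeP_alpha1 hE with ⟨h1, h2⟩
        rw [hdc] at h1 h2
        have hK := alpha1_add_abar1 ha
        rw [f2_snoc hbV (neg_mem_pm hx), f2_snoc ha hx]
        rcases hx with rfl | rfl
        · have hk : Odd k := by
            rcases Nat.even_or_odd k with he | ho
            · rw [he.neg_one_pow] at hxk; norm_num at hxk
            · exact ho
          rw [if_pos hk] at h1 h2
          norm_num
          linarith
        · have hk : ¬ Odd k := by
            intro ho
            rw [ho.neg_one_pow] at hxk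
            norm_num at hxk
          rw [if_neg hk] at h1 h2
          norm_num
          linarith
      rw [heq, SP_add, SP_const]
      rw [PhiP]
    · rw [if_neg hxk, if_neg hxk]

lemma PhiM_succ_snoc (ha : a ∈ V K) (hx : x = -1 ∨ x = 1) (k : ℕ) :
    PhiM (K+1) (k+1) (Fin.snoc a x)
      = (PhiM K (k+1) a + (if Odd (k+1) then 1 else 0) * (abarK K (k+1) a : ℤ))
        + if x = (-1:ℤ)^(k+1) then
            (PhiM K k a + (if x = 1 then ((K:ℤ)+1) else -(K:ℤ)) * (abarK K k a : ℤ))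
          else 0 := by
  rw [PhiM]
  rw [SM_succ_snoc ha hx (fun c => f2 (K+1) c - f2 (K+1) (Fin.snoc a x)) k]
  congr 1
  · have heq : SM K (k+1) a (fun b => f2 (K+1) (Fin.snoc b x) - f2 (K+1) (Fin.snoc a x))
        = SM K (k+1) a (fun b => (f2 K b - f2 K a) + (if Odd (k+1) then 1 else 0)) := by
      apply SM_congr
      intro b _ hE hdc
      have hbV : b ∈ V K := (mem_Eminus.mp hE).2.1
      rcases edgeM_alpha1 hE with ⟨h1, h2⟩
      rw [hdc] at h1 h2
      rw [f2_snoc hbV hx, f2_snoc ha hx]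
      rcases hx with rfl | rfl
      · norm_num
        linarith
      · norm_num
        linarith
    rw [heq, SM_add, SM_const]
    rw [PhiM]
  · by_cases hxk : x = (-1:ℤ)^(k+1)
    · rw [if_pos hxk, if_pos hxk]
      have heq : SM K k a (fun b => f2 (K+1) (Fin.snoc b (-x)) - f2 (K+1) (Fin.snoc a x))
          = SM K k a (fun b => (f2 K b - f2 K a)
              + (if x = 1 then ((K:ℤ)+1) else -(K:ℤ))) := by
        apply SM_congr
        intro b _ hE hdc
        have hbV : b ∈ V K := (mem_Eminus.mp hE).2.1
        rcases edgeM_alpha1 hE with ⟨h1, h2⟩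
        rw [hdc] at h1 h2
        have hK := alpha1_add_abar1 ha
        rw [f2_snoc hbV (neg_mem_pm hx), f2_snoc ha hx]
        rcases hx with rfl | rfl
        · have hk : ¬ Odd k := by
            have : Odd (k+1) → ((-1:ℤ))^(k+1) = -1 := fun ho => ho.neg_one_pow
            intro ho
            have he1 : Even (k+1) := by
              rw [Nat.even_add_one]
              exact Nat.not_even_iff_odd.mpr ho
            rw [he1.neg_one_pow] at hxk
            norm_num at hxk
          rw [if_neg hk] at h1 h2
          norm_num
          linarith
        · have hk : Odd k := by
            have ho1 : ¬ Odd (k+1) := by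
              intro ho
              rw [ho.neg_one_pow] at hxk
              norm_num at hxk
            rw [Nat.odd_add_one] at ho1
            exact not_not.mp ho1
          rw [if_pos hk] at h1 h2
          norm_num
          linarith
      rw [heq, SM_add, SM_const]
      rw [PhiM]
    · rw [if_neg hxk, if_neg hxk]

lemma sum_ite_add_mul (s : Finset ℕ) (c : ℕ → Prop) [DecidablePred c] (P A : ℕ → ℤ) (r : ℤ) :
    (∑ j ∈ s, if c j then P j + r * A j else 0)
      = (∑ j ∈ s, if c j then P j else 0) + r * (∑ j ∈ s, if c j then A j else 0) := by
  rw [Finset.mul_sum, ← Finset.sum_add_distrib]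
  apply Finset.sum_congr rfl
  intro j _
  split <;> simp

lemma sum_parity_shiftE (n : ℕ) (C : ℕ → ℤ) :
    (∑ k ∈ Finset.range (n + 1), if Even k then C k else 0)
      = C 0 + ∑ j ∈ Finset.range n, if Odd j then C (j + 1) else 0 := by
  rw [Finset.sum_range_succ', if_pos Even.zero, add_comm]
  congr 1
  apply Finset.sum_congr rfl
  intro j _
  exact if_congr (Nat.even_add_one.trans Nat.not_even_iff_odd) rfl rfl

lemma sum_parity_shiftO (n : ℕ) (C : ℕ → ℤ) :
    (∑ k ∈ Finset.range (n + 1), if Odd k then C k else 0)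
      = ∑ j ∈ Finset.range n, if Even j then C (j + 1) else 0 := by
  rw [Finset.sum_range_succ', if_neg (by norm_num : ¬ Odd 0), add_zero]
  apply Finset.sum_congr rfl
  intro j _
  exact if_congr (Nat.odd_add_one.trans Nat.not_odd_iff_even) rfl rfl

lemma alphaEv_cast (K : ℕ) (a : Fin K → ℤ) :
    (alphaEv K a : ℤ)
      = ∑ k ∈ Finset.range (K+1), if Even k then (alphaK K k a : ℤ) else 0 := by
  rw [alphaEv]
  push_cast
  rw [Finset.sum_filter]

lemma alphaOd_cast (K : ℕ) (a : Fin K → ℤ) :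
    (alphaOd K a : ℤ)
      = ∑ k ∈ Finset.range (K+1), if Odd k then (alphaK K k a : ℤ) else 0 := by
  rw [alphaOd]
  push_cast
  rw [Finset.sum_filter]

lemma abarEv_cast (K : ℕ) (a : Fin K → ℤ) :
    (abarEv K a : ℤ)
      = ∑ k ∈ Finset.range (K+1), if Even k then (abarK K k a : ℤ) else 0 := by
  rw [abarEv]
  push_cast
  rw [Finset.sum_filter]

lemma abarOd_cast (K : ℕ) (a : Fin K → ℤ) :
    (abarOd K a : ℤ)
      = ∑ k ∈ Finset.range (K+1), if Odd k then (abarK K k a : ℤ) else 0 := by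
  rw [abarOd]
  push_cast
  rw [Finset.sum_filter]

lemma alphaEv_snoc (ha : a ∈ V K) (hx : x = -1 ∨ x = 1) :
    (alphaEv (K+1) (Fin.snoc a x) : ℤ)
      = (alphaEv K a : ℤ) + if x = -1 then (alphaOd K a : ℤ) else 0 := by
  have hshift : (alphaEv (K+1) (Fin.snoc a x) : ℤ)
      = (alphaK (K+1) 0 (Fin.snoc a x) : ℤ)
        + ∑ j ∈ Finset.range (K+1), if Odd j then (alphaK (K+1) (j+1) (Fin.snoc a x) : ℤ) else 0 := by
    rw [alphaEv_cast]
    exact sum_parity_shiftE (K+1) (fun k => (alphaK (K+1) k (Fin.snoc a x) : ℤ))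
  rw [hshift, alphaK_zero (snoc_mem_V.mpr ⟨ha, hx⟩)]
  have hrec : ∀ j ∈ Finset.range (K+1),
      (if Odd j then (alphaK (K+1) (j+1) (Fin.snoc a x) : ℤ) else 0)
        = (if Odd j then (alphaK K (j+1) a : ℤ) else 0)
          + (if x = -1 then (if Odd j then (alphaK K j a : ℤ) else 0) else 0) := by
    intro j _
    by_cases hj : Odd j
    · rw [if_pos hj, if_pos hj, alphaK_succ_snoc ha hx j, hj.neg_one_pow]
      by_cases hx1 : x = -1
      · rw [if_pos hx1, if_pos hx1, if_pos hj]
      · rw [if_neg hx1, if_neg hx1, add_zero]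
    · rw [if_neg hj, if_neg hj]
      by_cases hx1 : x = -1 <;> simp [hx1, hj]
  rw [Finset.sum_congr rfl hrec, Finset.sum_add_distrib]
  have h1 : (∑ k ∈ Finset.range (K+1+1), if Even k then (alphaK K k a : ℤ) else 0)
      = (alphaK K 0 a : ℤ)
        + ∑ j ∈ Finset.range (K+1), if Odd j then (alphaK K (j+1) a : ℤ) else 0 :=
    sum_parity_shiftE (K+1) (fun k => (alphaK K k a : ℤ))
  have h2 : (∑ k ∈ Finset.range (K+1+1), if Even k then (alphaK K k a : ℤ) else 0)
      = ∑ k ∈ Finset.range (K+1), if Even k then (alphaK K k a : ℤ) else 0 := by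
    rw [Finset.sum_range_succ, alphaK_top (by omega)]
    simp
  have h3 : (∑ j ∈ Finset.range (K+1), if x = -1 then (if Odd j then (alphaK K j a : ℤ) else 0) else 0)
      = if x = -1 then (∑ j ∈ Finset.range (K+1), if Odd j then (alphaK K j a : ℤ) else 0) else 0 := by
    split <;> simp
  rw [h3]
  have h0 : (alphaK K 0 a : ℤ) = 1 := alphaK_zero ha
  have hEv := alphaEv_cast K a
  have hOd := alphaOd_cast K a
  by_cases hx1 : x = -1
  · rw [if_pos hx1, if_pos hx1]
    linarith
  · rw [if_neg hx1, if_neg hx1]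
    linarith

lemma alphaOd_snoc (ha : a ∈ V K) (hx : x = -1 ∨ x = 1) :
    (alphaOd (K+1) (Fin.snoc a x) : ℤ)
      = (alphaOd K a : ℤ) + if x = 1 then (alphaEv K a : ℤ) else 0 := by
  have hshift : (alphaOd (K+1) (Fin.snoc a x) : ℤ)
      = ∑ j ∈ Finset.range (K+1), if Even j then (alphaK (K+1) (j+1) (Fin.snoc a x) : ℤ) else 0 := by
    rw [alphaOd_cast]
    exact sum_parity_shiftO (K+1) (fun k => (alphaK (K+1) k (Fin.snoc a x) : ℤ))
  rw [hshift]
  have hrec : ∀ j ∈ Finset.range (K+1),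
      (if Even j then (alphaK (K+1) (j+1) (Fin.snoc a x) : ℤ) else 0)
        = (if Even j then (alphaK K (j+1) a : ℤ) else 0)
          + (if x = 1 then (if Even j then (alphaK K j a : ℤ) else 0) else 0) := by
    intro j _
    by_cases hj : Even j
    · rw [if_pos hj, if_pos hj, alphaK_succ_snoc ha hx j, hj.neg_one_pow]
      by_cases hx1 : x = 1
      · rw [if_pos hx1, if_pos hx1, if_pos hj]
      · rw [if_neg hx1, if_neg hx1, add_zero]
    · rw [if_neg hj, if_neg hj]
      by_cases hx1 : x = 1 <;> simp [hx1, hj]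
  rw [Finset.sum_congr rfl hrec, Finset.sum_add_distrib]
  have h1 : (∑ k ∈ Finset.range (K+1+1), if Odd k then (alphaK K k a : ℤ) else 0)
      = ∑ j ∈ Finset.range (K+1), if Even j then (alphaK K (j+1) a : ℤ) else 0 :=
    sum_parity_shiftO (K+1) (fun k => (alphaK K k a : ℤ))
  have h2 : (∑ k ∈ Finset.range (K+1+1), if Odd k then (alphaK K k a : ℤ) else 0)
      = ∑ k ∈ Finset.range (K+1), if Odd k then (alphaK K k a : ℤ) else 0 := by
    rw [Finset.sum_range_succ, alphaK_top (by omega)]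
    simp
  have h3 : (∑ j ∈ Finset.range (K+1), if x = 1 then (if Even j then (alphaK K j a : ℤ) else 0) else 0)
      = if x = 1 then (∑ j ∈ Finset.range (K+1), if Even j then (alphaK K j a : ℤ) else 0) else 0 := by
    split <;> simp
  rw [h3]
  have hEv := alphaEv_cast K a
  have hOd := alphaOd_cast K a
  by_cases hx1 : x = 1
  · rw [if_pos hx1, if_pos hx1]
    linarith
  · rw [if_neg hx1, if_neg hx1]
    linarith

lemma abarEv_snoc (ha : a ∈ V K) (hx : x = -1 ∨ x = 1) :
    (abarEv (K+1) (Fin.snoc a x) : ℤ)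
      = (abarEv K a : ℤ) + if x = 1 then (abarOd K a : ℤ) else 0 := by
  have hshift : (abarEv (K+1) (Fin.snoc a x) : ℤ)
      = (abarK (K+1) 0 (Fin.snoc a x) : ℤ)
        + ∑ j ∈ Finset.range (K+1), if Odd j then (abarK (K+1) (j+1) (Fin.snoc a x) : ℤ) else 0 := by
    rw [abarEv_cast]
    exact sum_parity_shiftE (K+1) (fun k => (abarK (K+1) k (Fin.snoc a x) : ℤ))
  rw [hshift, abarK_zero (snoc_mem_V.mpr ⟨ha, hx⟩)]
  have hrec : ∀ j ∈ Finset.range (K+1),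
      (if Odd j then (abarK (K+1) (j+1) (Fin.snoc a x) : ℤ) else 0)
        = (if Odd j then (abarK K (j+1) a : ℤ) else 0)
          + (if x = 1 then (if Odd j then (abarK K j a : ℤ) else 0) else 0) := by
    intro j _
    by_cases hj : Odd j
    · have hj1 : Even (j+1) := by
        rw [Nat.even_add_one]
        exact Nat.not_even_iff_odd.mpr hj
      rw [if_pos hj, if_pos hj, abarK_succ_snoc ha hx j, hj1.neg_one_pow]
      by_cases hx1 : x = 1
      · rw [if_pos hx1, if_pos hx1, if_pos hj]
      · rw [if_neg hx1, if_neg hx1, add_zero]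
    · rw [if_neg hj, if_neg hj]
      by_cases hx1 : x = 1 <;> simp [hx1, hj]
  rw [Finset.sum_congr rfl hrec, Finset.sum_add_distrib]
  have h1 : (∑ k ∈ Finset.range (K+1+1), if Even k then (abarK K k a : ℤ) else 0)
      = (abarK K 0 a : ℤ)
        + ∑ j ∈ Finset.range (K+1), if Odd j then (abarK K (j+1) a : ℤ) else 0 :=
    sum_parity_shiftE (K+1) (fun k => (abarK K k a : ℤ))
  have h2 : (∑ k ∈ Finset.range (K+1+1), if Even k then (abarK K k a : ℤ) else 0)
      = ∑ k ∈ Finset.range (K+1), if Even k then (abarK K k a : ℤ) else 0 := by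
    rw [Finset.sum_range_succ, abarK_top (by omega)]
    simp
  have h3 : (∑ j ∈ Finset.range (K+1), if x = 1 then (if Odd j then (abarK K j a : ℤ) else 0) else 0)
      = if x = 1 then (∑ j ∈ Finset.range (K+1), if Odd j then (abarK K j a : ℤ) else 0) else 0 := by
    split <;> simp
  rw [h3]
  have h0 : (abarK K 0 a : ℤ) = 1 := abarK_zero ha
  have hEv := abarEv_cast K a
  have hOd := abarOd_cast K a
  by_cases hx1 : x = 1
  · rw [if_pos hx1, if_pos hx1]
    linarith
  · rw [if_neg hx1, if_neg hx1]
    linarith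

lemma abarOd_snoc (ha : a ∈ V K) (hx : x = -1 ∨ x = 1) :
    (abarOd (K+1) (Fin.snoc a x) : ℤ)
      = (abarOd K a : ℤ) + if x = -1 then (abarEv K a : ℤ) else 0 := by
  have hshift : (abarOd (K+1) (Fin.snoc a x) : ℤ)
      = ∑ j ∈ Finset.range (K+1), if Even j then (abarK (K+1) (j+1) (Fin.snoc a x) : ℤ) else 0 := by
    rw [abarOd_cast]
    exact sum_parity_shiftO (K+1) (fun k => (abarK (K+1) k (Fin.snoc a x) : ℤ))
  rw [hshift]
  have hrec : ∀ j ∈ Finset.range (K+1),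
      (if Even j then (abarK (K+1) (j+1) (Fin.snoc a x) : ℤ) else 0)
        = (if Even j then (abarK K (j+1) a : ℤ) else 0)
          + (if x = -1 then (if Even j then (abarK K j a : ℤ) else 0) else 0) := by
    intro j _
    by_cases hj : Even j
    · have hj1 : Odd (j+1) := by
        rw [Nat.odd_add_one]
        exact Nat.not_odd_iff_even.mpr hj
      rw [if_pos hj, if_pos hj, abarK_succ_snoc ha hx j, hj1.neg_one_pow]
      by_cases hx1 : x = -1
      · rw [if_pos hx1, if_pos hx1, if_pos hj]
      · rw [if_neg hx1, if_neg hx1, add_zero]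
    · rw [if_neg hj, if_neg hj]
      by_cases hx1 : x = -1 <;> simp [hx1, hj]
  rw [Finset.sum_congr rfl hrec, Finset.sum_add_distrib]
  have h1 : (∑ k ∈ Finset.range (K+1+1), if Odd k then (abarK K k a : ℤ) else 0)
      = ∑ j ∈ Finset.range (K+1), if Even j then (abarK K (j+1) a : ℤ) else 0 :=
    sum_parity_shiftO (K+1) (fun k => (abarK K k a : ℤ))
  have h2 : (∑ k ∈ Finset.range (K+1+1), if Odd k then (abarK K k a : ℤ) else 0)
      = ∑ k ∈ Finset.range (K+1), if Odd k then (abarK K k a : ℤ) else 0 := by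
    rw [Finset.sum_range_succ, abarK_top (by omega)]
    simp
  have h3 : (∑ j ∈ Finset.range (K+1), if x = -1 then (if Even j then (abarK K j a : ℤ) else 0) else 0)
      = if x = -1 then (∑ j ∈ Finset.range (K+1), if Even j then (abarK K j a : ℤ) else 0) else 0 := by
    split <;> simp
  rw [h3]
  have hEv := abarEv_cast K a
  have hOd := abarOd_cast K a
  by_cases hx1 : x = -1
  · rw [if_pos hx1, if_pos hx1]
    linarith
  · rw [if_neg hx1, if_neg hx1]
    linarith

def PhiPe (K : ℕ) (a : Fin K → ℤ) : ℤ :=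
  ∑ k ∈ Finset.range (K+1), if Even k then PhiP K k a else 0

def PhiPo (K : ℕ) (a : Fin K → ℤ) : ℤ :=
  ∑ k ∈ Finset.range (K+1), if Odd k then PhiP K k a else 0

def PhiMe (K : ℕ) (a : Fin K → ℤ) : ℤ :=
  ∑ k ∈ Finset.range (K+1), if Even k then PhiM K k a else 0

def PhiMo (K : ℕ) (a : Fin K → ℤ) : ℤ :=
  ∑ k ∈ Finset.range (K+1), if Odd k then PhiM K k a else 0

lemma PhiPe_snoc (ha : a ∈ V K) (hx : x = -1 ∨ x = 1) :
    PhiPe (K+1) (Fin.snoc a x)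
      = PhiPe K a + if x = -1 then (PhiPo K a - ((K:ℤ)+1) * (alphaOd K a : ℤ)) else 0 := by
  have hshift : PhiPe (K+1) (Fin.snoc a x)
      = PhiP (K+1) 0 (Fin.snoc a x)
        + ∑ j ∈ Finset.range (K+1), if Odd j then PhiP (K+1) (j+1) (Fin.snoc a x) else 0 := by
    rw [PhiPe]
    exact sum_parity_shiftE (K+1) (fun k => PhiP (K+1) k (Fin.snoc a x))
  rw [hshift, PhiP_zero (snoc_mem_V.mpr ⟨ha, hx⟩), zero_add]
  have hrec : ∀ j ∈ Finset.range (K+1),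
      (if Odd j then PhiP (K+1) (j+1) (Fin.snoc a x) else 0)
        = (if Odd j then PhiP K (j+1) a else 0)
          + (if x = -1 then
              (if Odd j then (PhiP K j a + (-((K:ℤ)+1)) * (alphaK K j a : ℤ)) else 0) else 0) := by
    intro j _
    by_cases hj : Odd j
    · rw [if_pos hj, if_pos hj, PhiP_succ_snoc ha hx j, hj.neg_one_pow]
      have hodd1 : ¬ Odd (j+1) := by
        rw [Nat.odd_add_one]
        exact not_not_intro hj
      rw [if_neg hodd1]
      by_cases hx1 : x = -1
      · rw [if_pos hx1, if_pos hx1, if_pos hj, if_neg (by rw [hx1]; norm_num : ¬ x = 1)]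
        ring
      · rw [if_neg hx1, if_neg hx1]
        ring
    · rw [if_neg hj, if_neg hj]
      by_cases hx1 : x = -1 <;> simp [hx1, hj]
  rw [Finset.sum_congr rfl hrec, Finset.sum_add_distrib]
  have h1 : (∑ k ∈ Finset.range (K+1+1), if Even k then PhiP K k a else 0)
      = PhiP K 0 a + ∑ j ∈ Finset.range (K+1), if Odd j then PhiP K (j+1) a else 0 :=
    sum_parity_shiftE (K+1) (fun k => PhiP K k a)
  have h2 : (∑ k ∈ Finset.range (K+1+1), if Even k then PhiP K k a else 0)
      = ∑ k ∈ Finset.range (K+1), if Even k then PhiP K k a else 0 := by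
    rw [Finset.sum_range_succ, PhiP_top (by omega)]
    simp
  have h0 : PhiP K 0 a = 0 := PhiP_zero ha
  have h3 : (∑ j ∈ Finset.range (K+1),
        if x = -1 then (if Odd j then (PhiP K j a + (-((K:ℤ)+1)) * (alphaK K j a : ℤ)) else 0) else 0)
      = if x = -1 then (∑ j ∈ Finset.range (K+1),
          if Odd j then (PhiP K j a + (-((K:ℤ)+1)) * (alphaK K j a : ℤ)) else 0) else 0 := by
    split <;> simp
  have h4 : (∑ j ∈ Finset.range (K+1),
        if Odd j then (PhiP K j a + (-((K:ℤ)+1)) * (alphaK K j a : ℤ)) else 0)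
      = (∑ j ∈ Finset.range (K+1), if Odd j then PhiP K j a else 0)
        + (-((K:ℤ)+1)) * (∑ j ∈ Finset.range (K+1), if Odd j then (alphaK K j a : ℤ) else 0) :=
    sum_ite_add_mul _ _ _ _ _
  have hPe : PhiPe K a = ∑ k ∈ Finset.range (K+1), if Even k then PhiP K k a else 0 := rfl
  have hPo : PhiPo K a = ∑ k ∈ Finset.range (K+1), if Odd k then PhiP K k a else 0 := rfl
  have hOd := alphaOd_cast K a
  have hOdm : ((K:ℤ)+1) * (alphaOd K a : ℤ)
      = ((K:ℤ)+1) * (∑ j ∈ Finset.range (K+1), if Odd j then (alphaK K j a : ℤ) else 0) := by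
    rw [hOd]
  rw [h3]
  by_cases hx1 : x = -1
  · rw [if_pos hx1, if_pos hx1, h4]
    linarith
  · rw [if_neg hx1, if_neg hx1]
    linarith

lemma PhiPo_snoc (ha : a ∈ V K) (hx : x = -1 ∨ x = 1) :
    PhiPo (K+1) (Fin.snoc a x)
      = PhiPo K a - (alphaOd K a : ℤ)
        + if x = 1 then (PhiPe K a + (K:ℤ) * (alphaEv K a : ℤ)) else 0 := by
  have hshift : PhiPo (K+1) (Fin.snoc a x)
      = ∑ j ∈ Finset.range (K+1), if Even j then PhiP (K+1) (j+1) (Fin.snoc a x) else 0 := by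
    rw [PhiPo]
    exact sum_parity_shiftO (K+1) (fun k => PhiP (K+1) k (Fin.snoc a x))
  rw [hshift]
  have hrec : ∀ j ∈ Finset.range (K+1),
      (if Even j then PhiP (K+1) (j+1) (Fin.snoc a x) else 0)
        = (if Even j then (PhiP K (j+1) a + (-1) * (alphaK K (j+1) a : ℤ)) else 0)
          + (if x = 1 then
              (if Even j then (PhiP K j a + (K:ℤ) * (alphaK K j a : ℤ)) else 0) else 0) := by
    intro j _
    by_cases hj : Even j
    · rw [if_pos hj, if_pos hj, PhiP_succ_snoc ha hx j, hj.neg_one_pow]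
      have hodd1 : Odd (j+1) := by
        rw [Nat.odd_add_one]
        exact Nat.not_odd_iff_even.mpr hj
      rw [if_pos hodd1]
      by_cases hx1 : x = 1
      · rw [if_pos hx1, if_pos hx1, if_pos hj, if_pos hx1]
        ring
      · rw [if_neg hx1, if_neg hx1]
        ring
    · rw [if_neg hj, if_neg hj]
      by_cases hx1 : x = 1 <;> simp [hx1, hj]
  rw [Finset.sum_congr rfl hrec, Finset.sum_add_distrib]
  have h4 : (∑ j ∈ Finset.range (K+1),
        if Even j then (PhiP K (j+1) a + (-1) * (alphaK K (j+1) a : ℤ)) else 0)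
      = (∑ j ∈ Finset.range (K+1), if Even j then PhiP K (j+1) a else 0)
        + (-1) * (∑ j ∈ Finset.range (K+1), if Even j then (alphaK K (j+1) a : ℤ) else 0) :=
    sum_ite_add_mul _ _ _ _ _
  have h5 : (∑ k ∈ Finset.range (K+1+1), if Odd k then PhiP K k a else 0)
      = ∑ j ∈ Finset.range (K+1), if Even j then PhiP K (j+1) a else 0 :=
    sum_parity_shiftO (K+1) (fun k => PhiP K k a)
  have h6 : (∑ k ∈ Finset.range (K+1+1), if Odd k then PhiP K k a else 0)
      = ∑ k ∈ Finset.range (K+1), if Odd k then PhiP K k a else 0 := by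
    rw [Finset.sum_range_succ, PhiP_top (by omega)]
    simp
  have h7 : (∑ k ∈ Finset.range (K+1+1), if Odd k then (alphaK K k a : ℤ) else 0)
      = ∑ j ∈ Finset.range (K+1), if Even j then (alphaK K (j+1) a : ℤ) else 0 :=
    sum_parity_shiftO (K+1) (fun k => (alphaK K k a : ℤ))
  have h8 : (∑ k ∈ Finset.range (K+1+1), if Odd k then (alphaK K k a : ℤ) else 0)
      = ∑ k ∈ Finset.range (K+1), if Odd k then (alphaK K k a : ℤ) else 0 := by
    rw [Finset.sum_range_succ, alphaK_top (by omega)]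
    simp
  have h3 : (∑ j ∈ Finset.range (K+1),
        if x = 1 then (if Even j then (PhiP K j a + (K:ℤ) * (alphaK K j a : ℤ)) else 0) else 0)
      = if x = 1 then (∑ j ∈ Finset.range (K+1),
          if Even j then (PhiP K j a + (K:ℤ) * (alphaK K j a : ℤ)) else 0) else 0 := by
    split <;> simp
  have h9 : (∑ j ∈ Finset.range (K+1),
        if Even j then (PhiP K j a + (K:ℤ) * (alphaK K j a : ℤ)) else 0)
      = (∑ j ∈ Finset.range (K+1), if Even j then PhiP K j a else 0)
        + (K:ℤ) * (∑ j ∈ Finset.range (K+1), if Even j then (alphaK K j a : ℤ) else 0) :=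
    sum_ite_add_mul _ _ _ _ _
  have hPe : PhiPe K a = ∑ k ∈ Finset.range (K+1), if Even k then PhiP K k a else 0 := rfl
  have hPo : PhiPo K a = ∑ k ∈ Finset.range (K+1), if Odd k then PhiP K k a else 0 := rfl
  have hOd := alphaOd_cast K a
  have hEv := alphaEv_cast K a
  have hEvm : (K:ℤ) * (alphaEv K a : ℤ)
      = (K:ℤ) * (∑ j ∈ Finset.range (K+1), if Even j then (alphaK K j a : ℤ) else 0) := by
    rw [hEv]
  rw [h3]
  by_cases hx1 : x = 1
  · rw [if_pos hx1, if_pos hx1, h4, h9]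
    linarith
  · rw [if_neg hx1, if_neg hx1, h4]
    linarith

lemma PhiMe_snoc (ha : a ∈ V K) (hx : x = -1 ∨ x = 1) :
    PhiMe (K+1) (Fin.snoc a x)
      = PhiMe K a + if x = 1 then (PhiMo K a + ((K:ℤ)+1) * (abarOd K a : ℤ)) else 0 := by
  have hshift : PhiMe (K+1) (Fin.snoc a x)
      = PhiM (K+1) 0 (Fin.snoc a x)
        + ∑ j ∈ Finset.range (K+1), if Odd j then PhiM (K+1) (j+1) (Fin.snoc a x) else 0 := by
    rw [PhiMe]
    exact sum_parity_shiftE (K+1) (fun k => PhiM (K+1) k (Fin.snoc a x))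
  rw [hshift, PhiM_zero (snoc_mem_V.mpr ⟨ha, hx⟩), zero_add]
  have hrec : ∀ j ∈ Finset.range (K+1),
      (if Odd j then PhiM (K+1) (j+1) (Fin.snoc a x) else 0)
        = (if Odd j then PhiM K (j+1) a else 0)
          + (if x = 1 then
              (if Odd j then (PhiM K j a + ((K:ℤ)+1) * (abarK K j a : ℤ)) else 0) else 0) := by
    intro j _
    by_cases hj : Odd j
    · have hj1 : Even (j+1) := by
        rw [Nat.even_add_one]
        exact Nat.not_even_iff_odd.mpr hj
      have hodd1 : ¬ Odd (j+1) := by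
        rw [Nat.odd_add_one]
        exact not_not_intro hj
      rw [if_pos hj, if_pos hj, PhiM_succ_snoc ha hx j, hj1.neg_one_pow, if_neg hodd1]
      by_cases hx1 : x = 1
      · rw [if_pos hx1, if_pos hx1, if_pos hj, if_pos hx1]
        ring
      · rw [if_neg hx1, if_neg hx1]
        ring
    · rw [if_neg hj, if_neg hj]
      by_cases hx1 : x = 1 <;> simp [hx1, hj]
  rw [Finset.sum_congr rfl hrec, Finset.sum_add_distrib]
  have h1 : (∑ k ∈ Finset.range (K+1+1), if Even k then PhiM K k a else 0)
      = PhiM K 0 a + ∑ j ∈ Finset.range (K+1), if Odd j then PhiM K (j+1) a else 0 :=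
    sum_parity_shiftE (K+1) (fun k => PhiM K k a)
  have h2 : (∑ k ∈ Finset.range (K+1+1), if Even k then PhiM K k a else 0)
      = ∑ k ∈ Finset.range (K+1), if Even k then PhiM K k a else 0 := by
    rw [Finset.sum_range_succ, PhiM_top (by omega)]
    simp
  have h0 : PhiM K 0 a = 0 := PhiM_zero ha
  have h3 : (∑ j ∈ Finset.range (K+1),
        if x = 1 then (if Odd j then (PhiM K j a + ((K:ℤ)+1) * (abarK K j a : ℤ)) else 0) else 0)
      = if x = 1 then (∑ j ∈ Finset.range (K+1),
          if Odd j then (PhiM K j a + ((K:ℤ)+1) * (abarK K j a : ℤ)) else 0) else 0 := by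
    split <;> simp
  have h4 : (∑ j ∈ Finset.range (K+1),
        if Odd j then (PhiM K j a + ((K:ℤ)+1) * (abarK K j a : ℤ)) else 0)
      = (∑ j ∈ Finset.range (K+1), if Odd j then PhiM K j a else 0)
        + ((K:ℤ)+1) * (∑ j ∈ Finset.range (K+1), if Odd j then (abarK K j a : ℤ) else 0) :=
    sum_ite_add_mul _ _ _ _ _
  have hMe : PhiMe K a = ∑ k ∈ Finset.range (K+1), if Even k then PhiM K k a else 0 := rfl
  have hMo : PhiMo K a = ∑ k ∈ Finset.range (K+1), if Odd k then PhiM K k a else 0 := rfl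
  have hOd := abarOd_cast K a
  have hOdm : ((K:ℤ)+1) * (abarOd K a : ℤ)
      = ((K:ℤ)+1) * (∑ j ∈ Finset.range (K+1), if Odd j then (abarK K j a : ℤ) else 0) := by
    rw [hOd]
  rw [h3]
  by_cases hx1 : x = 1
  · rw [if_pos hx1, if_pos hx1, h4]
    linarith
  · rw [if_neg hx1, if_neg hx1]
    linarith

lemma PhiMo_snoc (ha : a ∈ V K) (hx : x = -1 ∨ x = 1) :
    PhiMo (K+1) (Fin.snoc a x)
      = PhiMo K a + (abarOd K a : ℤ)
        + if x = -1 then (PhiMe K a - (K:ℤ) * (abarEv K a : ℤ)) else 0 := by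
  have hshift : PhiMo (K+1) (Fin.snoc a x)
      = ∑ j ∈ Finset.range (K+1), if Even j then PhiM (K+1) (j+1) (Fin.snoc a x) else 0 := by
    rw [PhiMo]
    exact sum_parity_shiftO (K+1) (fun k => PhiM (K+1) k (Fin.snoc a x))
  rw [hshift]
  have hrec : ∀ j ∈ Finset.range (K+1),
      (if Even j then PhiM (K+1) (j+1) (Fin.snoc a x) else 0)
        = (if Even j then (PhiM K (j+1) a + 1 * (abarK K (j+1) a : ℤ)) else 0)
          + (if x = -1 then
              (if Even j then (PhiM K j a + (-(K:ℤ)) * (abarK K j a : ℤ)) else 0) else 0) := by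
    intro j _
    by_cases hj : Even j
    · have hodd1 : Odd (j+1) := by
        rw [Nat.odd_add_one]
        exact Nat.not_odd_iff_even.mpr hj
      rw [if_pos hj, if_pos hj, PhiM_succ_snoc ha hx j, hodd1.neg_one_pow, if_pos hodd1]
      by_cases hx1 : x = -1
      · rw [if_pos hx1, if_pos hx1, if_pos hj, if_neg (by rw [hx1]; norm_num : ¬ x = 1)]
      · rw [if_neg hx1, if_neg hx1]
    · rw [if_neg hj, if_neg hj]
      by_cases hx1 : x = -1 <;> simp [hx1, hj]
  rw [Finset.sum_congr rfl hrec, Finset.sum_add_distrib]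
  have h4 : (∑ j ∈ Finset.range (K+1),
        if Even j then (PhiM K (j+1) a + 1 * (abarK K (j+1) a : ℤ)) else 0)
      = (∑ j ∈ Finset.range (K+1), if Even j then PhiM K (j+1) a else 0)
        + 1 * (∑ j ∈ Finset.range (K+1), if Even j then (abarK K (j+1) a : ℤ) else 0) :=
    sum_ite_add_mul _ _ _ _ _
  have h5 : (∑ k ∈ Finset.range (K+1+1), if Odd k then PhiM K k a else 0)
      = ∑ j ∈ Finset.range (K+1), if Even j then PhiM K (j+1) a else 0 :=
    sum_parity_shiftO (K+1) (fun k => PhiM K k a)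
  have h6 : (∑ k ∈ Finset.range (K+1+1), if Odd k then PhiM K k a else 0)
      = ∑ k ∈ Finset.range (K+1), if Odd k then PhiM K k a else 0 := by
    rw [Finset.sum_range_succ, PhiM_top (by omega)]
    simp
  have h7 : (∑ k ∈ Finset.range (K+1+1), if Odd k then (abarK K k a : ℤ) else 0)
      = ∑ j ∈ Finset.range (K+1), if Even j then (abarK K (j+1) a : ℤ) else 0 :=
    sum_parity_shiftO (K+1) (fun k => (abarK K k a : ℤ))
  have h8 : (∑ k ∈ Finset.range (K+1+1), if Odd k then (abarK K k a : ℤ) else 0)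
      = ∑ k ∈ Finset.range (K+1), if Odd k then (abarK K k a : ℤ) else 0 := by
    rw [Finset.sum_range_succ, abarK_top (by omega)]
    simp
  have h3 : (∑ j ∈ Finset.range (K+1),
        if x = -1 then (if Even j then (PhiM K j a + (-(K:ℤ)) * (abarK K j a : ℤ)) else 0) else 0)
      = if x = -1 then (∑ j ∈ Finset.range (K+1),
          if Even j then (PhiM K j a + (-(K:ℤ)) * (abarK K j a : ℤ)) else 0) else 0 := by
    split <;> simp
  have h9 : (∑ j ∈ Finset.range (K+1),
        if Even j then (PhiM K j a + (-(K:ℤ)) * (abarK K j a : ℤ)) else 0)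
      = (∑ j ∈ Finset.range (K+1), if Even j then PhiM K j a else 0)
        + (-(K:ℤ)) * (∑ j ∈ Finset.range (K+1), if Even j then (abarK K j a : ℤ) else 0) :=
    sum_ite_add_mul _ _ _ _ _
  have hMe : PhiMe K a = ∑ k ∈ Finset.range (K+1), if Even k then PhiM K k a else 0 := rfl
  have hMo : PhiMo K a = ∑ k ∈ Finset.range (K+1), if Odd k then PhiM K k a else 0 := rfl
  have hOd := abarOd_cast K a
  have hEv := abarEv_cast K a
  have hEvm : (K:ℤ) * (abarEv K a : ℤ)
      = (K:ℤ) * (∑ j ∈ Finset.range (K+1), if Even j then (abarK K j a : ℤ) else 0) := by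
    rw [hEv]
  rw [h3]
  by_cases hx1 : x = -1
  · rw [if_pos hx1, if_pos hx1, h4, h9]
    linarith
  · rw [if_neg hx1, if_neg hx1, h4]
    linarith

lemma main_formulas : ∀ (K : ℕ), ∀ a ∈ V K,
    PhiPe K a = (alphaOd K a : ℤ) + (abarOd K a : ℤ) - (K:ℤ) * (alphaEv K a : ℤ)
    ∧ PhiPo K a = (abarEv K a : ℤ) - (alphaEv K a : ℤ)
    ∧ PhiMe K a = (K:ℤ) * (abarEv K a : ℤ) - (alphaOd K a : ℤ) - (abarOd K a : ℤ)
    ∧ PhiMo K a = (abarEv K a : ℤ) - (alphaEv K a : ℤ) := by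
  intro K
  induction K with
  | zero =>
    intro a ha
    have h1 : PhiPe 0 a = 0 := by
      rw [PhiPe, Finset.sum_range_one, if_pos Even.zero, PhiP_zero ha]
    have h2 : PhiPo 0 a = 0 := by
      rw [PhiPo, Finset.sum_range_one, if_neg (by norm_num : ¬ Odd 0)]
    have h3 : PhiMe 0 a = 0 := by
      rw [PhiMe, Finset.sum_range_one, if_pos Even.zero, PhiM_zero ha]
    have h4 : PhiMo 0 a = 0 := by
      rw [PhiMo, Finset.sum_range_one, if_neg (by norm_num : ¬ Odd 0)]
    have h5 : (alphaEv 0 a : ℤ) = 1 := by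
      rw [alphaEv_cast, Finset.sum_range_one, if_pos Even.zero, alphaK_zero ha]
    have h6 : (abarEv 0 a : ℤ) = 1 := by
      rw [abarEv_cast, Finset.sum_range_one, if_pos Even.zero, abarK_zero ha]
    have h7 : (alphaOd 0 a : ℤ) = 0 := by
      rw [alphaOd_cast, Finset.sum_range_one, if_neg (by norm_num : ¬ Odd 0)]
    have h8 : (abarOd 0 a : ℤ) = 0 := by
      rw [abarOd_cast, Finset.sum_range_one, if_neg (by norm_num : ¬ Odd 0)]
    rw [h1, h2, h3, h4, h5, h6, h7, h8]
    norm_num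
  | succ K ih =>
    intro a ha
    obtain ⟨a', x, rfl, ha', hx⟩ := exists_snoc ha
    obtain ⟨iPe, iPo, iMe, iMo⟩ := ih a' ha'
    rw [PhiPe_snoc ha' hx, PhiPo_snoc ha' hx, PhiMe_snoc ha' hx, PhiMo_snoc ha' hx,
      alphaEv_snoc ha' hx, alphaOd_snoc ha' hx, abarEv_snoc ha' hx, abarOd_snoc ha' hx,
      iPe, iPo, iMe, iMo]
    push_cast
    rcases hx with rfl | rfl
    · norm_num
      refine ⟨by ring, by ring, by ring, by ring⟩
    · norm_num
      refine ⟨by ring, by ring, by ring, by ring⟩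

lemma phi_split (K : ℕ) (a : Fin K → ℤ) (ha : a ∈ V K) :
    phi K a = PhiPe K a + PhiPo K a := by
  rw [phi]
  have h1 : ∑ p ∈ (Eplus K).filter (fun p => p.1 = a), (f2 K p.2 - f2 K p.1)
      = ∑ b ∈ V K, if (a, b) ∈ Eplus K then (f2 K b - f2 K a) else 0 := by
    rw [← Finset.sum_filter]
    apply Finset.sum_nbij' (i := fun p => p.2) (j := fun b => (a, b))
    · intro p hp
      rw [Finset.mem_filter] at hp ⊢
      rcases hp with ⟨hpE, hp1⟩
      have hpa : p = (a, p.2) := by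
        rw [← hp1]
      rw [hpa] at hpE
      exact ⟨(mem_Eplus.mp hpE).2.1, hpE⟩
    · intro b hb
      rw [Finset.mem_filter] at hb ⊢
      exact ⟨hb.2, rfl⟩
    · intro p hp
      rw [Finset.mem_filter] at hp
      exact Prod.ext hp.2.symm rfl
    · intro b _
      rfl
    · intro p hp
      rw [Finset.mem_filter] at hp
      rw [hp.2]
  rw [h1]
  have h2 : ∀ b ∈ V K, (if (a, b) ∈ Eplus K then (f2 K b - f2 K a) else 0)
      = ∑ k ∈ Finset.range (K+1),
          if ((a, b) ∈ Eplus K ∧ dc K a b = k) then (f2 K b - f2 K a) else 0 := by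
    intro b _
    have h3 : ∀ k, (if ((a, b) ∈ Eplus K ∧ dc K a b = k) then (f2 K b - f2 K a) else 0)
        = if dc K a b = k then (if (a, b) ∈ Eplus K then (f2 K b - f2 K a) else 0) else 0 := by
      intro k
      by_cases hc1 : (a, b) ∈ Eplus K <;> by_cases hc2 : dc K a b = k <;> simp [hc1, hc2]
    rw [Finset.sum_congr rfl (fun k _ => h3 k),
      Finset.sum_ite_eq (Finset.range (K+1)) (dc K a b)
        (fun _ => if (a, b) ∈ Eplus K then (f2 K b - f2 K a) else 0),
      if_pos (Finset.mem_range.mpr (Nat.lt_succ_of_le (dc_le a b)))]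
  rw [Finset.sum_congr rfl h2, Finset.sum_comm]
  rw [PhiPe, PhiPo, ← Finset.sum_add_distrib]
  apply Finset.sum_congr rfl
  intro k _
  rcases Nat.even_or_odd k with h | h
  · rw [if_pos h, if_neg (Nat.not_odd_iff_even.mpr h), add_zero]
    rfl
  · rw [if_neg (Nat.not_even_iff_odd.mpr h), if_pos h, zero_add]
    rfl

lemma phibar_split (K : ℕ) (a : Fin K → ℤ) (ha : a ∈ V K) :
    phibar K a = PhiMe K a + PhiMo K a := by
  rw [phibar]
  have h1 : ∑ p ∈ (Eminus K).filter (fun p => p.1 = a), (f2 K p.2 - f2 K p.1)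
      = ∑ b ∈ V K, if (a, b) ∈ Eminus K then (f2 K b - f2 K a) else 0 := by
    rw [← Finset.sum_filter]
    apply Finset.sum_nbij' (i := fun p => p.2) (j := fun b => (a, b))
    · intro p hp
      rw [Finset.mem_filter] at hp ⊢
      rcases hp with ⟨hpE, hp1⟩
      have hpa : p = (a, p.2) := by
        rw [← hp1]
      rw [hpa] at hpE
      exact ⟨(mem_Eminus.mp hpE).2.1, hpE⟩
    · intro b hb
      rw [Finset.mem_filter] at hb ⊢
      exact ⟨hb.2, rfl⟩
    · intro p hp
      rw [Finset.mem_filter] at hp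
      exact Prod.ext hp.2.symm rfl
    · intro b _
      rfl
    · intro p hp
      rw [Finset.mem_filter] at hp
      rw [hp.2]
  rw [h1]
  have h2 : ∀ b ∈ V K, (if (a, b) ∈ Eminus K then (f2 K b - f2 K a) else 0)
      = ∑ k ∈ Finset.range (K+1),
          if ((a, b) ∈ Eminus K ∧ dc K a b = k) then (f2 K b - f2 K a) else 0 := by
    intro b _
    have h3 : ∀ k, (if ((a, b) ∈ Eminus K ∧ dc K a b = k) then (f2 K b - f2 K a) else 0)
        = if dc K a b = k then (if (a, b) ∈ Eminus K then (f2 K b - f2 K a) else 0) else 0 := by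
      intro k
      by_cases hc1 : (a, b) ∈ Eminus K <;> by_cases hc2 : dc K a b = k <;> simp [hc1, hc2]
    rw [Finset.sum_congr rfl (fun k _ => h3 k),
      Finset.sum_ite_eq (Finset.range (K+1)) (dc K a b)
        (fun _ => if (a, b) ∈ Eminus K then (f2 K b - f2 K a) else 0),
      if_pos (Finset.mem_range.mpr (Nat.lt_succ_of_le (dc_le a b)))]
  rw [Finset.sum_congr rfl h2, Finset.sum_comm]
  rw [PhiMe, PhiMo, ← Finset.sum_add_distrib]
  apply Finset.sum_congr rfl
  intro k _
  rcases Nat.even_or_odd k with h | h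
  · rw [if_pos h, if_neg (Nat.not_odd_iff_even.mpr h), add_zero]
    rfl
  · rw [if_neg (Nat.not_even_iff_odd.mpr h), if_pos h, zero_add]
    rfl

end CRW

/-- Explicit values of `φ` and `φ̄`. -/
theorem statement12 (K : ℕ) (hK : 1 ≤ K) (a : Fin K → ℤ) (ha : a ∈ CRW.V K) :
    CRW.phi K a = (CRW.abarEv K a : ℤ) - ((K : ℤ) + 1) * (CRW.alphaEv K a : ℤ)
        + (CRW.alphaOd K a : ℤ) + (CRW.abarOd K a : ℤ) ∧
    CRW.phibar K a = -(CRW.alphaEv K a : ℤ) + ((K : ℤ) + 1) * (CRW.abarEv K a : ℤ)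
        - (CRW.abarOd K a : ℤ) - (CRW.alphaOd K a : ℤ) := by
  obtain ⟨hPe, hPo, hMe, hMo⟩ := CRW.main_formulas K a ha
  constructor
  · rw [CRW.phi_split K a ha, hPe, hPo]
    ring
  · rw [CRW.phibar_split K a ha, hMe, hMo]
    ring
end
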